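/- arXiv:0905.2399 — 3 statements merged into one kernel-verified Lean document; each statement's English description precedes it below -/
import Mathlib

section
/- Let 2 ≤ p < 3, θ > 1, T > 0, and let ω be a control on [0,T]. Let z̃¹ : Δ_T → ℝ^m and z̃² : Δ_T → ℝ^m ⊗ ℝ^m (identified with m×m real matrices) satisfy, for constants C, K ≥ 0: (i) ‖z̃¹_{s,t}‖ ≤ K ω(s,t)^{1/p} and ‖z̃²_{s,t}‖ ≤ K ω(s,t)^{2/p} for all (s,t) ∈ Δ_T; (ii) ‖z̃¹_{s,t} − z̃¹_{s,u} − z̃¹_{u,t}‖ ≤ C ω(s,t)^θ and ‖z̃²_{s,t} − z̃²_{s,u} − z̃²_{u,t} − z̃¹_{s,u} ⊗ z̃¹_{u,t}‖ ≤ C ω(s,t)^θ for all 0 ≤ s ≤ u ≤ t ≤ T. Then there exists a unique pair (z¹, z²), with z¹ : Δ_T → ℝ^m and z² : Δ_T → ℝ^m ⊗ ℝ^m, such that z¹_{s,t} = z¹_{s,u} + z¹_{u,t} and z²_{s,t} = z²_{s,u} + z²_{u,t} + z¹_{s,u} ⊗ z¹_{u,t} for all 0 ≤ s ≤ u ≤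 t ≤ T, and such that for some constant C′ (depending only on C, K, θ, p and ω(0,T)), ‖z¹_{s,t} − z̃¹_{s,t}‖ ≤ C′ ω(s,t)^θ and ‖z²_{s,t} − z̃²_{s,t}‖ ≤ C′ ω(s,t)^θ for all (s,t) ∈ Δ_T. -/
noncomputable section

/-- `E n` is the Euclidean space `ℝ^n`. -/
abbrev E (n : ℕ) : Type := EuclideanSpace ℝ (Fin n)

/-- A control on `[0,T]`: continuous, vanishing on the diagonal, nonnegative and
superadditive function on the simplex `Δ_T = {(s,t) : 0 ≤ s ≤ t ≤ T}`. -/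
def IsControl (T : ℝ) (ω : ℝ → ℝ → ℝ) : Prop :=
  ContinuousOn (fun q : ℝ × ℝ => ω q.1 q.2) {q : ℝ × ℝ | 0 ≤ q.1 ∧ q.1 ≤ q.2 ∧ q.2 ≤ T} ∧
  (∀ s t, 0 ≤ s → s ≤ t → t ≤ T → 0 ≤ ω s t) ∧
  (∀ t, 0 ≤ t → t ≤ T → ω t t = 0) ∧
  (∀ s u t, 0 ≤ s → s ≤ u → u ≤ t → t ≤ T → ω s u + ω u t ≤ ω s t)

/-- The elementary tensor `u ⊗ v`, realised in `ℝ^a ⊗ ℝ^b ≃ ℝ^{a×b}`. -/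
def tensor {a b : ℕ} (u : E a) (v : E b) : EuclideanSpace ℝ (Fin a × Fin b) :=
  WithLp.toLp 2 (fun p : Fin a × Fin b => u p.1 * v p.2)


theorem tensor_norm {a b : ℕ} (u : E a) (v : E b) : ‖tensor u v‖ = ‖u‖ * ‖v‖ := by
  rw [EuclideanSpace.norm_eq, EuclideanSpace.norm_eq, EuclideanSpace.norm_eq,
    ← Real.sqrt_mul (by positivity)]
  congr 1
  rw [Fintype.sum_prod_type, Finset.sum_mul_sum]
  apply Finset.sum_congr rfl
  intro i _
  apply Finset.sum_congr rfl
  intro j _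
  simp only [tensor, PiLp.toLp_apply]
  rw [norm_mul, mul_pow]

namespace SewingProof

open Finset

/-- adjacent monotonicity implies monotonicity up to `k` -/
theorem adjMono {α : Type*} [Preorder α] {f : ℕ → α} {k : ℕ}
    (h : ∀ i, i < k → f i ≤ f (i + 1)) : ∀ {i j}, i ≤ j → j ≤ k → f i ≤ f j := by
  intro i j hij hjk
  induction j with
  | zero => simp [Nat.le_zero.mp hij]
  | succ n ih =>
    rcases Nat.lt_or_ge i (n + 1) with hl | hg
    · exact le_trans (ih (Nat.lt_succ_iff.mp hl) (le_trans (Nat.le_succ n) hjk))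
        (h n (Nat.lt_of_succ_le hjk))
    · have : i = n + 1 := le_antisymm hij hg
      simp [this]

/-- A partition of `[s,t]` given by a map `π : ℕ → ℝ` with `k` steps. -/
def PPart (s t : ℝ) (π : ℕ → ℝ) (k : ℕ) : Prop :=
  π 0 = s ∧ π k = t ∧ ∀ i, i < k → π i ≤ π (i + 1)

theorem PPart.mono {s t : ℝ} {π : ℕ → ℝ} {k : ℕ} (h : PPart s t π k) :
    ∀ {i j}, i ≤ j → j ≤ k → π i ≤ π j := fun hij hjk => adjMono h.2.2 hij hjk

theorem PPart.left_le {s t : ℝ} {π : ℕ → ℝ} {k : ℕ} (h : PPart s t π k) {i : ℕ} (hi : i ≤ k) :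
    s ≤ π i := h.1 ▸ h.mono (Nat.zero_le i) hi

theorem PPart.le_right {s t : ℝ} {π : ℕ → ℝ} {k : ℕ} (h : PPart s t π k) {i : ℕ} (hi : i ≤ k) :
    π i ≤ t := h.2.1 ▸ h.mono hi le_rfl

theorem PPart.st {s t : ℝ} {π : ℕ → ℝ} {k : ℕ} (h : PPart s t π k) : s ≤ t :=
  h.1 ▸ h.le_right (Nat.zero_le k)

variable {V : Type*} [NormedAddCommGroup V]

/-- Riemann-type sum of `ζ` along a partition. -/
def PSum (ζ : ℝ → ℝ → V) (π : ℕ → ℝ) (k : ℕ) : V :=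
  ∑ i ∈ Finset.range k, ζ (π i) (π (i + 1))

section Control

variable {T : ℝ} {ω : ℝ → ℝ → ℝ}

theorem omega_nonneg (hω : IsControl T ω) {s t : ℝ} (hs : 0 ≤ s) (hst : s ≤ t) (ht : t ≤ T) :
    0 ≤ ω s t := hω.2.1 s t hs hst ht

theorem omega_mono (hω : IsControl T ω) {s' s t t' : ℝ} (hs' : 0 ≤ s') (h1 : s' ≤ s)
    (h2 : s ≤ t) (h3 : t ≤ t') (ht' : t' ≤ T) : ω s t ≤ ω s' t' := by
  obtain ⟨-, hpos, -, hsup⟩ := hω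
  have hA := hsup s' s t (by linarith) h1 h2 (by linarith)
  have hB := hsup s' t t' (by linarith) (by linarith) h3 ht'
  have h1' := hpos s' s (by linarith) h1 (by linarith)
  have h2' := hpos t t' (by linarith) h3 (by linarith)
  linarith

/-- superadditivity along a partition -/
theorem chain_sum (hω : IsControl T ω) {s : ℝ} {π : ℕ → ℝ} :
    ∀ {k : ℕ} {t : ℝ}, PPart s t π k → 0 ≤ s → t ≤ T →
      ∑ i ∈ Finset.range k, ω (π i) (π (i + 1)) ≤ ω s t := by
  intro k
  induction k with
  | zero =>
    intro t h hs ht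
    have : s = t := by rw [← h.1, h.2.1]
    simp [this, omega_nonneg hω (this ▸ hs) le_rfl ht]
  | succ n ih =>
    intro t h hs ht
    have hsub : PPart s (π n) π n := ⟨h.1, rfl, fun i hi => h.2.2 i (Nat.lt_succ_of_lt hi)⟩
    have hπn : π n ≤ t := h.le_right (Nat.le_succ n)
    have hsπn : s ≤ π n := h.left_le (Nat.le_succ n)
    rw [Finset.sum_range_succ]
    have h1 := ih hsub hs (le_trans hπn ht)
    have h2 := hω.2.2.2 s (π n) t hs hsπn (h.2.1 ▸ h.2.2 n (Nat.lt_succ_self n)) ht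
    have h3 : π (n+1) = t := h.2.1
    rw [h3]
    linarith

end Control

/-- partial sums of the series `∑ (2/j)^θ` -/
def Bsum (θ : ℝ) (k : ℕ) : ℝ := ∑ j ∈ Finset.range k, (2 / (j : ℝ)) ^ θ

/-- the master constant -/
def Mθ (θ : ℝ) : ℝ := 2 ^ θ * ∑' j : ℕ, 1 / (j : ℝ) ^ θ

theorem Mθ_nonneg (θ : ℝ) : 0 ≤ Mθ θ := by
  apply mul_nonneg (Real.rpow_nonneg (by norm_num) θ)
  exact tsum_nonneg fun j => by positivity

theorem Bsum_le (θ : ℝ) (hθ : 1 < θ) (k : ℕ) : Bsum θ k ≤ Mθ θ := by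
  have hsum : Summable (fun j : ℕ => 1 / (j : ℝ) ^ θ) := Real.summable_one_div_nat_rpow.mpr hθ
  have heq : ∀ j : ℕ, (2 / (j : ℝ)) ^ θ = 2 ^ θ * (1 / (j : ℝ) ^ θ) := by
    intro j
    rw [Real.div_rpow (by norm_num) (Nat.cast_nonneg j), div_eq_mul_one_div]
  rw [Bsum, Mθ]
  calc ∑ j ∈ Finset.range k, (2 / (j : ℝ)) ^ θ
      = 2 ^ θ * ∑ j ∈ Finset.range k, 1 / (j : ℝ) ^ θ := by
        rw [Finset.mul_sum]; exact Finset.sum_congr rfl fun j _ => heq j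
    _ ≤ 2 ^ θ * ∑' j : ℕ, 1 / (j : ℝ) ^ θ := by
        apply mul_le_mul_of_nonneg_left _ (Real.rpow_nonneg (by norm_num) θ)
        exact hsum.sum_le_tsum _ (fun i _ => by positivity)

section Young

variable {T C θ : ℝ} {ω : ℝ → ℝ → ℝ} {ζ : ℝ → ℝ → V}

theorem zeta_diag (hω : IsControl T ω) (hθpos : 0 < θ)
    (hδ : ∀ s u t, 0 ≤ s → s ≤ u → u ≤ t → t ≤ T →
      ‖ζ s t - ζ s u - ζ u t‖ ≤ C * ω s t ^ θ) {t : ℝ} (ht0 : 0 ≤ t) (ht : t ≤ T) :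
    ζ t t = 0 := by
  have h := hδ t t t ht0 le_rfl le_rfl ht
  rw [hω.2.2.1 t ht0 ht, Real.zero_rpow (ne_of_gt hθpos), mul_zero] at h
  have : ζ t t - ζ t t - ζ t t = -ζ t t := by abel
  rw [this, norm_neg] at h
  exact norm_eq_zero.mp (le_antisymm h (norm_nonneg _))

/-- Young's maximal inequality: any partition sum is close to `ζ s t`. -/
theorem young (hω : IsControl T ω) (hθ : 1 < θ) (hC : 0 ≤ C)
    (hδ : ∀ s u t, 0 ≤ s → s ≤ u → u ≤ t → t ≤ T →
      ‖ζ s t - ζ s u - ζ u t‖ ≤ C * ω s t ^ θ) :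
    ∀ (k : ℕ) (π : ℕ → ℝ) (s t : ℝ), PPart s t π k → 0 ≤ s → t ≤ T →
      ‖PSum ζ π k - ζ s t‖ ≤ C * Bsum θ k * ω s t ^ θ := by
  intro k
  induction k using Nat.strong_induction_on with
  | _ k ih =>
    intro π s t hp hs ht
    match k, ih with
    | 0, _ =>
      have hst : s = t := by rw [← hp.1, hp.2.1]
      have : ζ s t = 0 := hst ▸ zeta_diag hω (by linarith) hδ (hst ▸ hs) (hst ▸ ht)
      simp [PSum, this, Bsum]
    | 1, _ =>
      have h1 : PSum ζ π 1 = ζ s t := by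
        rw [PSum, Finset.sum_range_one, hp.1, ← hp.2.1]
      rw [h1, sub_self, norm_zero, Bsum]
      simp [Real.zero_rpow (by positivity : θ ≠ 0)]
    | (n+2), ih =>
      set q := (n + 2) / 2 with hq
      have hq1 : 1 ≤ q := by omega
      have h2q : n + 1 ≤ 2 * q := by omega
      have hωst : 0 ≤ ω s t := omega_nonneg hω hs hp.st ht
      -- the even-indexed chain bound
      have hchain : ∑ j ∈ Finset.range q, ω (π (2*j)) (π (2*j+2)) ≤ ω s t := by
        have hpp : PPart s (π (2*q)) (fun j => π (2*j)) q :=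
          ⟨by simpa using hp.1, rfl, fun i hi => hp.mono (by omega) (by omega)⟩
        have h1 := chain_sum hω hpp hs (le_trans (hp.le_right (by omega)) ht)
        have h2 : ω s (π (2*q)) ≤ ω s t :=
          omega_mono hω hs le_rfl hpp.st (hp.le_right (by omega)) ht
        calc ∑ j ∈ Finset.range q, ω (π (2*j)) (π (2*j+2))
            = ∑ j ∈ Finset.range q,
                ω ((fun j => π (2*j)) j) ((fun j => π (2*j)) (j+1)) := by
              apply Finset.sum_congr rfl; intro j _
              have h3 : 2 * (j + 1) = 2 * j + 2 := by ring
              simp only [h3]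
          _ ≤ ω s t := le_trans h1 h2
      -- find a small point to remove
      have hqpos : (0:ℝ) < (q:ℝ) := by exact_mod_cast Nat.lt_of_lt_of_le Nat.zero_lt_one hq1
      have havg : ∃ j ∈ Finset.range q, ω (π (2*j)) (π (2*j+2)) ≤ ω s t / q := by
        apply Finset.exists_le_of_sum_le ⟨0, Finset.mem_range.mpr hq1⟩
        rw [Finset.sum_const, Finset.card_range, nsmul_eq_mul,
          mul_div_cancel₀ _ (ne_of_gt hqpos)]
        exact hchain
      obtain ⟨j₀, hj₀q, hj₀⟩ := havg
      set a := 2 * j₀ with ha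
      have hj₀q' : j₀ < q := Finset.mem_range.mp hj₀q
      have ha2 : a + 2 ≤ n + 2 := by omega
      set π' : ℕ → ℝ := fun j => if j < a + 1 then π j else π (j + 1) with hπ'
      have hp' : PPart s t π' (n + 1) := by
        refine ⟨?_, ?_, ?_⟩
        · simp only [hπ']; rw [if_pos (by omega)]; exact hp.1
        · simp only [hπ']; rw [if_neg (by omega)]; exact hp.2.1
        · intro j hj
          simp only [hπ']
          by_cases hc1 : j + 1 < a + 1
          · rw [if_pos (by omega), if_pos hc1]; exact hp.2.2 j (by omega)
          · by_cases hc2 : j < a + 1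
            · rw [if_pos hc2, if_neg hc1]
              have hja : j = a := by omega
              subst hja
              exact hp.mono (by omega) (by omega)
            · rw [if_neg hc2, if_neg (by omega)]
              exact hp.2.2 (j+1) (by omega)
      -- sum identity
      have e1 : PSum ζ π (n+2) = (∑ j ∈ Finset.Ico 0 a, ζ (π j) (π (j+1)))
          + ζ (π a) (π (a+1)) + ζ (π (a+1)) (π (a+2))
          + ∑ j ∈ Finset.Ico (a+2) (n+2), ζ (π j) (π (j+1)) := by
        rw [PSum, Finset.range_eq_Ico,
          ← Finset.sum_Ico_consecutive (fun j => ζ (π j) (π (j+1)))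
            (by omega : 0 ≤ a+2) (by omega : a+2 ≤ n+2),
          ← Finset.sum_Ico_consecutive (fun j => ζ (π j) (π (j+1)))
            (by omega : 0 ≤ a+1) (by omega : a+1 ≤ a+2),
          ← Finset.sum_Ico_consecutive (fun j => ζ (π j) (π (j+1)))
            (by omega : 0 ≤ a) (by omega : a ≤ a+1)]
        have t1 : ∑ j ∈ Finset.Ico a (a+1), ζ (π j) (π (j+1)) = ζ (π a) (π (a+1)) := by
          rw [Finset.sum_Ico_eq_sum_range]; simp
        have t2 : ∑ j ∈ Finset.Ico (a+1) (a+2), ζ (π j) (π (j+1)) = ζ (π (a+1)) (π (a+2)) := by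
          rw [Finset.sum_Ico_eq_sum_range]; simp
        rw [t1, t2]
      have e2 : PSum ζ π' (n+1) = (∑ j ∈ Finset.Ico 0 a, ζ (π j) (π (j+1)))
          + ζ (π a) (π (a+2))
          + ∑ j ∈ Finset.Ico (a+2) (n+2), ζ (π j) (π (j+1)) := by
        rw [PSum, Finset.range_eq_Ico,
          ← Finset.sum_Ico_consecutive (fun j => ζ (π' j) (π' (j+1)))
            (by omega : 0 ≤ a+1) (by omega : a+1 ≤ n+1),
          ← Finset.sum_Ico_consecutive (fun j => ζ (π' j) (π' (j+1)))
            (by omega : 0 ≤ a) (by omega : a ≤ a+1)]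
        have t1 : ∑ j ∈ Finset.Ico 0 a, ζ (π' j) (π' (j+1))
            = ∑ j ∈ Finset.Ico 0 a, ζ (π j) (π (j+1)) := by
          apply Finset.sum_congr rfl
          intro j hj
          have hja : j < a := (Finset.mem_Ico.mp hj).2
          simp only [hπ']
          rw [if_pos (by omega), if_pos (by omega)]
        have t2 : ∑ j ∈ Finset.Ico a (a+1), ζ (π' j) (π' (j+1)) = ζ (π a) (π (a+2)) := by
          rw [Finset.sum_Ico_eq_sum_range]
          simp only [Nat.add_sub_cancel_left, Finset.sum_range_one, Nat.add_zero]
          simp only [hπ']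
          rw [if_pos (by omega), if_neg (by omega)]
        have t3 : ∑ j ∈ Finset.Ico (a+1) (n+1), ζ (π' j) (π' (j+1))
            = ∑ j ∈ Finset.Ico (a+2) (n+2), ζ (π j) (π (j+1)) := by
          rw [Finset.sum_Ico_eq_sum_range, Finset.sum_Ico_eq_sum_range]
          have hnn : n + 1 - (a + 1) = n + 2 - (a + 2) := by omega
          rw [hnn]
          apply Finset.sum_congr rfl
          intro j hj
          simp only [hπ']
          rw [if_neg (by omega), if_neg (by omega)]
          congr 2 <;> omega
        rw [t1, t2, t3]
      have hid : PSum ζ π (n+2) - PSum ζ π' (n+1)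
          = ζ (π a) (π (a+1)) + ζ (π (a+1)) (π (a+2)) - ζ (π a) (π (a+2)) := by
        rw [e1, e2]; abel
      -- bounds
      have hπa0 : (0:ℝ) ≤ π a := le_trans hs (hp.left_le (by omega))
      have hπaT : π (a+2) ≤ T := le_trans (hp.le_right ha2) ht
      have hdef := hδ (π a) (π (a+1)) (π (a+2)) hπa0 (hp.2.2 a (by omega))
        (hp.2.2 (a+1) (by omega)) hπaT
      have hωp : 0 ≤ ω (π a) (π (a+2)) :=
        omega_nonneg hω hπa0 (hp.mono (by omega) ha2) hπaT
      have hn1 : (0:ℝ) < (n:ℝ) + 1 := by positivity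
      have h2q' : ((n:ℝ) + 1) ≤ 2 * (q:ℝ) := by exact_mod_cast h2q
      have hω2 : ω (π a) (π (a+2)) ≤ 2 / ((n:ℝ)+1) * ω s t := by
        refine le_trans hj₀ ?_
        rw [div_le_iff₀ hqpos]
        rw [show 2 / ((n:ℝ)+1) * ω s t * (q:ℝ) = 2 * (q:ℝ) * ω s t / ((n:ℝ)+1) by ring,
          le_div_iff₀ hn1]
        nlinarith [mul_le_mul_of_nonneg_left h2q' hωst]
      have hrp : ω (π a) (π (a+2)) ^ θ ≤ (2/((n:ℝ)+1))^θ * ω s t ^ θ := by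
        rw [← Real.mul_rpow (by positivity) hωst]
        exact Real.rpow_le_rpow hωp hω2 (by linarith)
      have hIH := ih (n+1) (by omega) π' s t hp' hs ht
      have hB : Bsum θ (n+2) = Bsum θ (n+1) + (2/((n:ℝ)+1))^θ := by
        rw [Bsum, Bsum, Finset.sum_range_succ]
        norm_num
      have hnorm2 : ‖PSum ζ π (n+2) - PSum ζ π' (n+1)‖ ≤ C * ((2/((n:ℝ)+1))^θ * ω s t ^ θ) := by
        rw [hid]
        have hneg : ζ (π a) (π (a+1)) + ζ (π (a+1)) (π (a+2)) - ζ (π a) (π (a+2))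
            = -(ζ (π a) (π (a+2)) - ζ (π a) (π (a+1)) - ζ (π (a+1)) (π (a+2))) := by abel
        rw [hneg, norm_neg]
        calc ‖ζ (π a) (π (a+2)) - ζ (π a) (π (a+1)) - ζ (π (a+1)) (π (a+2))‖
            ≤ C * ω (π a) (π (a+2)) ^ θ := hdef
          _ ≤ C * ((2/((n:ℝ)+1))^θ * ω s t ^ θ) := mul_le_mul_of_nonneg_left hrp hC
      calc ‖PSum ζ π (n+2) - ζ s t‖
          = ‖(PSum ζ π' (n+1) - ζ s t) + (PSum ζ π (n+2) - PSum ζ π' (n+1))‖ := by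
            congr 1; abel
        _ ≤ ‖PSum ζ π' (n+1) - ζ s t‖ + ‖PSum ζ π (n+2) - PSum ζ π' (n+1)‖ := norm_add_le _ _
        _ ≤ C * Bsum θ (n+1) * ω s t ^ θ + C * ((2/((n:ℝ)+1))^θ * ω s t ^ θ) :=
            add_le_add hIH hnorm2
        _ = C * Bsum θ (n+2) * ω s t ^ θ := by rw [hB]; ring

theorem young' (hω : IsControl T ω) (hθ : 1 < θ) (hC : 0 ≤ C)
    (hδ : ∀ s u t, 0 ≤ s → s ≤ u → u ≤ t → t ≤ T →
      ‖ζ s t - ζ s u - ζ u t‖ ≤ C * ω s t ^ θ)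
    {k : ℕ} {π : ℕ → ℝ} {s t : ℝ} (hp : PPart s t π k) (hs : 0 ≤ s) (ht : t ≤ T) :
    ‖PSum ζ π k - ζ s t‖ ≤ C * Mθ θ * ω s t ^ θ := by
  refine le_trans (young hω hθ hC hδ k π s t hp hs ht) ?_
  apply mul_le_mul_of_nonneg_right _ (Real.rpow_nonneg (omega_nonneg hω hs hp.st ht) θ)
  exact mul_le_mul_of_nonneg_left (Bsum_le θ hθ k) hC

theorem rpow_theta_le {x ε θ : ℝ} (hθ : 1 < θ) (hx : 0 ≤ x) (hxe : x ≤ ε) :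
    x ^ θ ≤ ε ^ (θ - 1) * x := by
  rcases eq_or_lt_of_le hx with h0 | h0
  · rw [← h0, Real.zero_rpow (by positivity), mul_zero]
  · have hxx : x ^ θ = x ^ (θ - 1) * x := by
      calc x ^ θ = x ^ (θ - 1 + 1) := by congr 1; ring
        _ = x ^ (θ - 1) * x ^ (1:ℝ) := Real.rpow_add h0 _ _
        _ = x ^ (θ - 1) * x := by rw [Real.rpow_one]
    rw [hxx]
    exact mul_le_mul_of_nonneg_right
      (Real.rpow_le_rpow hx hxe (by linarith)) hx

/-- refinement estimate: a refinement's sum is close to the coarse sum. -/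
theorem refine_est (hω : IsControl T ω) (hθ : 1 < θ) (hC : 0 ≤ C)
    (hδ : ∀ s u t, 0 ≤ s → s ≤ u → u ≤ t → t ≤ T →
      ‖ζ s t - ζ s u - ζ u t‖ ≤ C * ω s t ^ θ)
    {k r : ℕ} {π ρ : ℕ → ℝ} {g : ℕ → ℕ} {ε s t : ℝ}
    (hp : PPart s t π k) (hq : PPart s t ρ r)
    (hg0 : g 0 = 0) (hgk : g k = r) (hgm : ∀ j, j < k → g j ≤ g (j+1))
    (hcomp : ∀ j, j ≤ k → ρ (g j) = π j)
    (hs : 0 ≤ s) (ht : t ≤ T) (hε : 0 ≤ ε)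
    (hmesh : ∀ j, j < k → ω (π j) (π (j+1)) ≤ ε) :
    ‖PSum ζ ρ r - PSum ζ π k‖ ≤ C * Mθ θ * (ε ^ (θ - 1) * ω s t) := by
  have hgmono : ∀ {i j}, i ≤ j → j ≤ k → g i ≤ g j := fun hij hjk => adjMono hgm hij hjk
  -- block decomposition of the fine sum
  have block : ∀ j, j ≤ k → ∑ i ∈ Finset.range (g j), ζ (ρ i) (ρ (i+1))
      = ∑ j' ∈ Finset.range j, ∑ i ∈ Finset.Ico (g j') (g (j'+1)), ζ (ρ i) (ρ (i+1)) := by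
    intro j
    induction j with
    | zero => simp [hg0]
    | succ m ihm =>
      intro hm
      rw [Finset.sum_range_succ, ← ihm (by omega), Finset.range_eq_Ico, Finset.range_eq_Ico]
      exact (Finset.sum_Ico_consecutive (fun i => ζ (ρ i) (ρ (i+1)))
        (Nat.zero_le (g m)) (hgm m (by omega))).symm
  -- each block is close to the corresponding coarse increment
  have hblockj : ∀ j, j < k →
      ‖(∑ i ∈ Finset.Ico (g j) (g (j+1)), ζ (ρ i) (ρ (i+1))) - ζ (π j) (π (j+1))‖
        ≤ C * Mθ θ * ω (π j) (π (j+1)) ^ θ := by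
    intro j hj
    have hgj1 : g (j+1) ≤ r := hgk ▸ hgmono (Nat.succ_le_of_lt hj) le_rfl
    have hσ : PPart (π j) (π (j+1)) (fun i => ρ (g j + i)) (g (j+1) - g j) := by
      refine ⟨by simpa using hcomp j (le_of_lt hj), ?_, ?_⟩
      · show ρ (g j + (g (j+1) - g j)) = π (j+1)
        rw [Nat.add_sub_cancel' (hgm j hj)]; exact hcomp (j+1) hj
      · intro i hi
        exact hq.2.2 (g j + i) (by omega)
    have hbs : ∑ i ∈ Finset.Ico (g j) (g (j+1)), ζ (ρ i) (ρ (i+1))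
        = PSum ζ (fun i => ρ (g j + i)) (g (j+1) - g j) := by
      rw [PSum, Finset.sum_Ico_eq_sum_range]
      rfl
    rw [hbs]
    exact young' hω hθ hC hδ hσ (le_trans hs (hp.left_le (by omega)))
      (le_trans (hp.le_right (by omega)) ht)
  have main : PSum ζ ρ r - PSum ζ π k
      = ∑ j ∈ Finset.range k,
        ((∑ i ∈ Finset.Ico (g j) (g (j+1)), ζ (ρ i) (ρ (i+1))) - ζ (π j) (π (j+1))) := by
    rw [Finset.sum_sub_distrib, PSum, PSum, ← block k le_rfl, hgk]
  rw [main]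
  calc ‖∑ j ∈ Finset.range k, ((∑ i ∈ Finset.Ico (g j) (g (j+1)), ζ (ρ i) (ρ (i+1)))
          - ζ (π j) (π (j+1)))‖
      ≤ ∑ j ∈ Finset.range k, ‖(∑ i ∈ Finset.Ico (g j) (g (j+1)), ζ (ρ i) (ρ (i+1)))
          - ζ (π j) (π (j+1))‖ := norm_sum_le _ _
    _ ≤ ∑ j ∈ Finset.range k, C * Mθ θ * (ε ^ (θ-1) * ω (π j) (π (j+1))) := by
        apply Finset.sum_le_sum
        intro j hj
        have hjk := Finset.mem_range.mp hj
        refine le_trans (hblockj j hjk) ?_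
        apply mul_le_mul_of_nonneg_left _ (mul_nonneg hC (Mθ_nonneg θ))
        exact rpow_theta_le hθ
          (omega_nonneg hω (le_trans hs (hp.left_le (by omega))) (hp.2.2 j hjk)
            (le_trans (hp.le_right (by omega)) ht))
          (hmesh j hjk)
    _ = C * Mθ θ * (ε ^ (θ-1) * ∑ j ∈ Finset.range k, ω (π j) (π (j+1))) := by
        simp only [Finset.mul_sum]
    _ ≤ C * Mθ θ * (ε ^ (θ-1) * ω s t) := by
        apply mul_le_mul_of_nonneg_left _ (mul_nonneg hC (Mθ_nonneg θ))
        exact mul_le_mul_of_nonneg_left (chain_sum hω hp hs ht)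
          (Real.rpow_nonneg hε _)

end Young

section Merge

/-- common refinement of two partitions of the same interval -/
theorem merge_refine {s t : ℝ} {π τ : ℕ → ℝ} {k l : ℕ}
    (hp : PPart s t π k) (hq : PPart s t τ l) :
    ∃ (ρ : ℕ → ℝ) (r : ℕ) (g h : ℕ → ℕ), PPart s t ρ r ∧
      (g 0 = 0 ∧ g k = r ∧ (∀ j, j < k → g j ≤ g (j+1)) ∧ (∀ j, j ≤ k → ρ (g j) = π j)) ∧
      (h 0 = 0 ∧ h l = r ∧ (∀ j, j < l → h j ≤ h (j+1)) ∧ (∀ j, j ≤ l → ρ (h j) = τ j)) := by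
  classical
  set F : Finset ℝ := ((Finset.range (k+1)).image π) ∪ ((Finset.range (l+1)).image τ) with hF
  set L : List ℝ := F.sort (· ≤ ·) with hL
  have hsor : L.Pairwise (· < ·) := (Finset.sortedLT_sort F).pairwise
  have hmemF : ∀ x ∈ F, s ≤ x ∧ x ≤ t := by
    intro x hx
    rw [hF, Finset.mem_union] at hx
    rcases hx with hx | hx <;>
      obtain ⟨i, hi, rfl⟩ := Finset.mem_image.mp hx <;>
      have hik := Finset.mem_range.mp hi
    · exact ⟨hp.left_le (by omega), hp.le_right (by omega)⟩
    · exact ⟨hq.left_le (by omega), hq.le_right (by omega)⟩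
  have hπmem : ∀ j, j ≤ k → π j ∈ L := by
    intro j hj
    rw [hL, Finset.mem_sort, hF, Finset.mem_union]
    exact Or.inl (Finset.mem_image.mpr ⟨j, Finset.mem_range.mpr (by omega), rfl⟩)
  have hτmem : ∀ j, j ≤ l → τ j ∈ L := by
    intro j hj
    rw [hL, Finset.mem_sort, hF, Finset.mem_union]
    exact Or.inr (Finset.mem_image.mpr ⟨j, Finset.mem_range.mpr (by omega), rfl⟩)
  have hsmem : s ∈ L := hp.1 ▸ hπmem 0 (Nat.zero_le k)
  have htmem : t ∈ L := hp.2.1 ▸ hπmem k le_rfl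
  have h0len : 0 < L.length := List.length_pos_iff.mpr (List.ne_nil_of_mem hsmem)
  set r := L.length - 1 with hr
  have hrlen : L.length = r + 1 := by omega
  set ρ : ℕ → ℝ := fun i => L.getD i t with hρ
  have hget : ∀ i (hi : i < L.length), ρ i = L.get ⟨i, hi⟩ :=
    fun i hi => List.getD_eq_get L t ⟨i, hi⟩
  have hgetlt : ∀ (i j : ℕ) (hi : i < L.length) (hj : j < L.length), i < j →
      L.get ⟨i, hi⟩ < L.get ⟨j, hj⟩ := by
    intro i j hi hj hij
    exact hsor.rel_get_of_lt hij
  have hgetmem : ∀ (i : ℕ) (hi : i < L.length), s ≤ L.get ⟨i, hi⟩ ∧ L.get ⟨i, hi⟩ ≤ t := by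
    intro i hi
    exact hmemF _ ((Finset.mem_sort (· ≤ ·)).mp (L.get_mem _))
  have hρ0 : ρ 0 = s := by
    obtain ⟨n, hn⟩ := List.mem_iff_get.mp hsmem
    rw [hget 0 h0len]
    rcases Nat.eq_zero_or_pos n.1 with h0 | h0
    · rw [← hn]; congr 1; exact (Fin.ext h0.symm)
    · have hlt := hgetlt 0 n.1 h0len n.isLt h0
      have : L.get ⟨n.1, n.isLt⟩ = s := by rw [← hn]
      rw [this] at hlt
      exact absurd (hgetmem 0 h0len).1 (not_le.mpr hlt)
  have hρr : ρ r = t := by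
    obtain ⟨n, hn⟩ := List.mem_iff_get.mp htmem
    have hrl : r < L.length := by omega
    rw [hget r hrl]
    have hn1 : n.1 ≤ r := by have := n.isLt; omega
    rcases eq_or_lt_of_le hn1 with h0 | h0
    · rw [← hn]; congr 1; exact (Fin.ext h0.symm)
    · have hlt := hgetlt n.1 r n.isLt hrl h0
      have he : L.get ⟨n.1, n.isLt⟩ = t := by rw [← hn]
      rw [he] at hlt
      exact absurd (hgetmem r hrl).2 (not_le.mpr hlt)
  have hρpart : PPart s t ρ r := by
    refine ⟨hρ0, hρr, ?_⟩
    intro i hi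
    rw [hget i (by omega), hget (i+1) (by omega)]
    exact le_of_lt (hgetlt i (i+1) (by omega) (by omega) (by omega))
  -- generic construction of the refinement index map
  have key : ∀ (σ : ℕ → ℝ) (m : ℕ), PPart s t σ m → (∀ j, j ≤ m → σ j ∈ L) →
      ∃ g : ℕ → ℕ, g 0 = 0 ∧ g m = r ∧ (∀ j, j < m → g j ≤ g (j+1)) ∧
        (∀ j, j ≤ m → ρ (g j) = σ j) := by
    intro σ m hσ hmem
    refine ⟨fun j => L.idxOf (σ j), ?_, ?_, ?_, ?_⟩
    case _ =>
      -- g 0 = 0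
      by_contra hne
      have hidx : L.idxOf (σ 0) < L.length := List.idxOf_lt_length_iff.mpr (hmem 0 (Nat.zero_le m))
      have hpos : 0 < L.idxOf (σ 0) := Nat.pos_of_ne_zero hne
      have hlt := hgetlt 0 _ h0len hidx hpos
      rw [List.idxOf_get hidx, hσ.1] at hlt
      have hs0 : L.get ⟨0, h0len⟩ = s := by rw [← hget 0 h0len, hρ0]
      rw [hs0] at hlt
      exact lt_irrefl s hlt
    case _ =>
      -- g m = r
      have hidx : L.idxOf (σ m) < L.length := List.idxOf_lt_length_iff.mpr (hmem m le_rfl)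
      have hle : L.idxOf (σ m) ≤ r := by omega
      rcases eq_or_lt_of_le hle with h0 | h0
      · exact h0
      · exfalso
        have hrl : r < L.length := by omega
        have hlt := hgetlt _ r hidx hrl h0
        rw [List.idxOf_get hidx, hσ.2.1] at hlt
        have hsr : L.get ⟨r, hrl⟩ = t := by rw [← hget r hrl, hρr]
        rw [hsr] at hlt
        exact lt_irrefl t hlt
    case _ =>
      intro j hj
      by_contra hlt'
      push_neg at hlt'
      have hidx1 : L.idxOf (σ (j+1)) < L.length := List.idxOf_lt_length_iff.mpr (hmem (j+1) hj)
      have hidx0 : L.idxOf (σ j) < L.length :=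
        List.idxOf_lt_length_iff.mpr (hmem j (le_of_lt hj))
      have hlt2 := hgetlt _ _ hidx1 hidx0 hlt'
      rw [List.idxOf_get hidx1, List.idxOf_get hidx0] at hlt2
      exact absurd (hσ.2.2 j hj) (not_le.mpr hlt2)
    case _ =>
      intro j hj
      have hidx : L.idxOf (σ j) < L.length := List.idxOf_lt_length_iff.mpr (hmem j hj)
      rw [hget _ hidx]
      exact List.idxOf_get hidx
  obtain ⟨g, hg⟩ := key π k hp hπmem
  obtain ⟨h, hh⟩ := key τ l hq hτmem
  exact ⟨ρ, r, g, h, hρpart, hg, hh⟩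

end Merge

section Analysis

variable {T C θ : ℝ} {ω : ℝ → ℝ → ℝ} {ζ : ℝ → ℝ → V}

/-- comparison of two arbitrary partition sums via a common refinement -/
theorem two_partitions (hω : IsControl T ω) (hθ : 1 < θ) (hC : 0 ≤ C)
    (hδ : ∀ s u t, 0 ≤ s → s ≤ u → u ≤ t → t ≤ T →
      ‖ζ s t - ζ s u - ζ u t‖ ≤ C * ω s t ^ θ)
    {k l : ℕ} {π τ : ℕ → ℝ} {ε₁ ε₂ s t : ℝ}
    (hp : PPart s t π k) (hq : PPart s t τ l) (hs : 0 ≤ s) (ht : t ≤ T)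
    (hε₁ : 0 ≤ ε₁) (hε₂ : 0 ≤ ε₂)
    (hm1 : ∀ j, j < k → ω (π j) (π (j+1)) ≤ ε₁)
    (hm2 : ∀ j, j < l → ω (τ j) (τ (j+1)) ≤ ε₂) :
    ‖PSum ζ π k - PSum ζ τ l‖
      ≤ C * Mθ θ * (ε₁ ^ (θ-1) * ω s t) + C * Mθ θ * (ε₂ ^ (θ-1) * ω s t) := by
  obtain ⟨ρ, r, g, h, hρ, hg, hh⟩ := merge_refine hp hq
  have h1 := refine_est hω hθ hC hδ hp hρ hg.1 hg.2.1 hg.2.2.1 hg.2.2.2 hs ht hε₁ hm1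
  have h2 := refine_est hω hθ hC hδ hq hρ hh.1 hh.2.1 hh.2.2.1 hh.2.2.2 hs ht hε₂ hm2
  calc ‖PSum ζ π k - PSum ζ τ l‖
      = ‖(PSum ζ ρ r - PSum ζ τ l) - (PSum ζ ρ r - PSum ζ π k)‖ := by congr 1; abel
    _ ≤ ‖PSum ζ ρ r - PSum ζ τ l‖ + ‖PSum ζ ρ r - PSum ζ π k‖ := norm_sub_le _ _
    _ ≤ C * Mθ θ * (ε₂ ^ (θ-1) * ω s t) + C * Mθ θ * (ε₁ ^ (θ-1) * ω s t) := add_le_add h2 h1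
    _ = _ := by ring

/-- uniform continuity modulus for a control -/
theorem modulus (hω : IsControl T ω) {ε : ℝ} (hε : 0 < ε) :
    ∃ h > 0, ∀ a b, 0 ≤ a → a ≤ b → b ≤ T → b - a ≤ h → ω a b ≤ ε := by
  set S : Set (ℝ × ℝ) := {q | 0 ≤ q.1 ∧ q.1 ≤ q.2 ∧ q.2 ≤ T} with hS
  have hcl : IsClosed S :=
    (isClosed_le continuous_const continuous_fst).inter
      ((isClosed_le continuous_fst continuous_snd).inter
        (isClosed_le continuous_snd continuous_const))
  have hsub : S ⊆ (Set.Icc 0 T) ×ˢ (Set.Icc 0 T) := fun q hq =>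
    ⟨⟨hq.1, le_trans hq.2.1 hq.2.2⟩, ⟨le_trans hq.1 hq.2.1, hq.2.2⟩⟩
  have hcomp : IsCompact S := (isCompact_Icc.prod isCompact_Icc).of_isClosed_subset hcl hsub
  have hunif : UniformContinuousOn (fun q : ℝ × ℝ => ω q.1 q.2) S :=
    hcomp.uniformContinuousOn_of_continuous hω.1
  rw [Metric.uniformContinuousOn_iff] at hunif
  obtain ⟨d, hdpos, hd⟩ := hunif ε hε
  refine ⟨d/2, by positivity, ?_⟩
  intro a b ha hab hbT hdiff
  have hain : (a, b) ∈ S := ⟨ha, hab, hbT⟩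
  have hain2 : (a, a) ∈ S := ⟨ha, le_rfl, le_trans hab hbT⟩
  have hdist : dist ((a, b) : ℝ × ℝ) ((a, a) : ℝ × ℝ) < d := by
    rw [Prod.dist_eq]
    have h1 : dist b a = b - a := by
      rw [Real.dist_eq, abs_of_nonneg (by linarith)]
    calc max (dist a a) (dist b a) = dist b a := by
          rw [dist_self]; exact max_eq_right dist_nonneg
      _ = b - a := h1
      _ < d := by linarith
  have hkey := hd (a, b) hain (a, a) hain2 hdist
  simp only at hkey
  rw [hω.2.2.1 a ha (le_trans hab hbT), dist_zero_right, Real.norm_eq_abs] at hkey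
  calc ω a b ≤ |ω a b| := le_abs_self _
    _ ≤ ε := le_of_lt hkey

theorem eps_choice {θ a ε : ℝ} (hθ : 1 < θ) (ha : 0 ≤ a) (hε : 0 < ε) :
    ∃ ε' > 0, a * ε' ^ (θ - 1) < ε := by
  refine ⟨(ε / (a + 1)) ^ (1 / (θ - 1)), Real.rpow_pos_of_pos (by positivity) _, ?_⟩
  have hpow : ((ε / (a + 1)) ^ (1 / (θ - 1))) ^ (θ - 1) = ε / (a + 1) := by
    rw [← Real.rpow_mul (by positivity : (0:ℝ) ≤ ε / (a + 1)),
      one_div_mul_cancel (by linarith : θ - 1 ≠ 0), Real.rpow_one]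
  rw [hpow]
  calc a * (ε / (a + 1)) < (a + 1) * (ε / (a + 1)) :=
        mul_lt_mul_of_pos_right (by linarith) (by positivity)
    _ = ε := by field_simp

/-- uniform (in time) partitions -/
def unifP (n : ℕ) (s t : ℝ) : ℕ → ℝ := fun i => s + (i : ℝ) * ((t - s) / 2 ^ n)

theorem unifP_part {s t : ℝ} (n : ℕ) (hst : s ≤ t) : PPart s t (unifP n s t) (2 ^ n) := by
  have h2 : (0:ℝ) < 2 ^ n := by positivity
  refine ⟨by simp [unifP], ?_, ?_⟩
  · simp only [unifP]
    push_cast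
    field_simp
    ring
  · intro i hi
    show s + (i : ℝ) * ((t - s) / 2 ^ n) ≤ s + ((i+1 : ℕ) : ℝ) * ((t - s) / 2 ^ n)
    push_cast
    have hc : 0 ≤ (t - s) / 2 ^ n := div_nonneg (by linarith) (le_of_lt h2)
    nlinarith

theorem unifP_mesh {s t : ℝ} (n : ℕ) (i : ℕ) :
    unifP n s t (i + 1) - unifP n s t i = (t - s) / 2 ^ n := by
  show s + ((i+1 : ℕ) : ℝ) * ((t - s) / 2 ^ n) - (s + (i : ℝ) * ((t - s) / 2 ^ n))
      = (t - s) / 2 ^ n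
  push_cast
  ring

theorem unif_mesh_bound (hω : IsControl T ω) {s t h ε' : ℝ} (hs : 0 ≤ s) (hst : s ≤ t)
    (ht : t ≤ T) (hh : 0 ≤ h)
    (hmod : ∀ a b, 0 ≤ a → a ≤ b → b ≤ T → b - a ≤ h → ω a b ≤ ε') {n N : ℕ} (hn : N ≤ n)
    (hN : t - s ≤ h * 2 ^ N) :
    ∀ j, j < 2 ^ n → ω (unifP n s t j) (unifP n s t (j + 1)) ≤ ε' := by
  intro j hj
  have hpart := unifP_part n hst
  have h2N : (2:ℝ) ^ N ≤ 2 ^ n := by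
    apply pow_le_pow_right₀ (by norm_num) hn
  apply hmod _ _ (le_trans hs (hpart.left_le (by omega))) (hpart.2.2 j hj)
    (le_trans (hpart.le_right (by omega)) ht)
  rw [unifP_mesh]
  rw [div_le_iff₀ (by positivity)]
  calc t - s ≤ h * 2 ^ N := hN
    _ ≤ h * 2 ^ n := mul_le_mul_of_nonneg_left h2N hh

end Analysis

section Sewing

variable [CompleteSpace V] {T C θ : ℝ} {ω : ℝ → ℝ → ℝ} {ζ : ℝ → ℝ → V}

open Filter

theorem sewing_exists (hω : IsControl T ω) (hθ : 1 < θ) (hC : 0 ≤ C)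
    (hδ : ∀ s u t, 0 ≤ s → s ≤ u → u ≤ t → t ≤ T →
      ‖ζ s t - ζ s u - ζ u t‖ ≤ C * ω s t ^ θ) :
    ∃ Z : ℝ → ℝ → V,
      (∀ s u t, 0 ≤ s → s ≤ u → u ≤ t → t ≤ T → Z s t = Z s u + Z u t) ∧
      (∀ s t, 0 ≤ s → s ≤ t → t ≤ T → ‖Z s t - ζ s t‖ ≤ C * Mθ θ * ω s t ^ θ) := by
  set Z : ℝ → ℝ → V := fun s t => limUnder atTop (fun n => PSum ζ (unifP n s t) (2^n)) with hZ
  have hconv : ∀ s t, 0 ≤ s → s ≤ t → t ≤ T →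
      Tendsto (fun n => PSum ζ (unifP n s t) (2^n)) atTop (nhds (Z s t)) := by
    intro s t hs hst ht
    have hωst : 0 ≤ ω s t := omega_nonneg hω hs hst ht
    have hcauchy : CauchySeq (fun n => PSum ζ (unifP n s t) (2^n)) := by
      rw [Metric.cauchySeq_iff']
      intro ε hε
      obtain ⟨ε', hε'pos, hε'⟩ := eps_choice hθ
        (mul_nonneg (mul_nonneg (by norm_num) (mul_nonneg hC (Mθ_nonneg θ))) hωst :
          (0:ℝ) ≤ 2 * (C * Mθ θ) * ω s t) hε
      obtain ⟨h, hhpos, hmod⟩ := modulus hω hε'pos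
      obtain ⟨N, hN0⟩ := pow_unbounded_of_one_lt ((t - s) / h) (by norm_num : (1:ℝ) < 2)
      have hN : t - s ≤ h * 2 ^ N := by
        rw [div_lt_iff₀ hhpos] at hN0
        nlinarith
      refine ⟨N, ?_⟩
      intro n hn
      rw [dist_eq_norm]
      have hb := two_partitions hω hθ hC hδ (unifP_part n hst) (unifP_part N hst) hs ht
        (le_of_lt hε'pos) (le_of_lt hε'pos)
        (unif_mesh_bound hω hs hst ht (le_of_lt hhpos) hmod hn hN)
        (unif_mesh_bound hω hs hst ht (le_of_lt hhpos) hmod le_rfl hN)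
      exact lt_of_le_of_lt (le_trans hb (le_of_eq (by ring))) hε'
    exact hcauchy.tendsto_limUnder
  have hclose : ∀ s t, 0 ≤ s → s ≤ t → t ≤ T → ‖Z s t - ζ s t‖ ≤ C * Mθ θ * ω s t ^ θ := by
    intro s t hs hst ht
    have hnorm := ((hconv s t hs hst ht).sub (tendsto_const_nhds (x := ζ s t))).norm
    exact le_of_tendsto' hnorm (fun n => young' hω hθ hC hδ (unifP_part n hst) hs ht)
  refine ⟨Z, ?_, hclose⟩
  intro s u t hs hsu hut ht
  have hst : s ≤ t := le_trans hsu hut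
  have hu0 : 0 ≤ u := le_trans hs hsu
  have huT : u ≤ T := le_trans hut ht
  have hωst : 0 ≤ ω s t := omega_nonneg hω hs hst ht
  set c : ℕ → ℕ → ℝ := fun n i => if i ≤ 2^n then unifP n s u i else unifP n u t (i - 2^n)
    with hc
  have hcval : ∀ n j, j ≤ 2^n → c n (2^n + j) = unifP n u t j := by
    intro n j hj
    rcases Nat.eq_zero_or_pos j with rfl | hjpos
    · simp only [hc]
      rw [if_pos (by omega)]
      show unifP n s u (2^n + 0) = unifP n u t 0
      rw [Nat.add_zero, (unifP_part n hsu).2.1]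
      simp [unifP]
    · simp only [hc]
      rw [if_neg (by omega)]
      congr 1
      omega
  have hcpart : ∀ n, PPart s t (c n) (2^n + 2^n) := by
    intro n
    have h1 : (1:ℕ) ≤ 2^n := Nat.one_le_two_pow
    refine ⟨?_, ?_, ?_⟩
    · simp only [hc]; rw [if_pos (by omega)]; exact (unifP_part n hsu).1
    · exact (hcval n (2^n) le_rfl).trans (unifP_part n hut).2.1
    · intro i hi
      by_cases hile : i + 1 ≤ 2^n
      · simp only [hc]; rw [if_pos (by omega), if_pos hile]
        exact (unifP_part n hsu).2.2 i (by omega)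
      · have hi2 : 2^n ≤ i := by omega
        obtain ⟨j, rfl⟩ : ∃ j, i = 2^n + j := ⟨i - 2^n, by omega⟩
        rw [hcval n j (by omega), show 2^n + j + 1 = 2^n + (j+1) by omega,
          hcval n (j+1) (by omega)]
        exact (unifP_part n hut).2.2 j (by omega)
  have hcsum : ∀ n, PSum ζ (c n) (2^n + 2^n)
      = PSum ζ (unifP n s u) (2^n) + PSum ζ (unifP n u t) (2^n) := by
    intro n
    rw [PSum, Finset.range_eq_Ico,
      ← Finset.sum_Ico_consecutive (fun i => ζ (c n i) (c n (i+1)))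
        (Nat.zero_le (2^n)) (Nat.le_add_right (2^n) (2^n))]
    congr 1
    · rw [← Finset.range_eq_Ico, PSum]
      apply Finset.sum_congr rfl
      intro i hi
      have hik := Finset.mem_range.mp hi
      simp only [hc]
      rw [if_pos (by omega), if_pos (by omega)]
    · rw [Finset.sum_Ico_eq_sum_range, PSum]
      have h2 : 2^n + 2^n - 2^n = 2^n := by simp
      rw [h2]
      apply Finset.sum_congr rfl
      intro i hi
      have hik := Finset.mem_range.mp hi
      rw [hcval n i (by omega), show 2^n + i + 1 = 2^n + (i+1) by omega,
        hcval n (i+1) (by omega)]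
  have hzero : Tendsto (fun n => PSum ζ (unifP n s t) (2^n)
      - (PSum ζ (unifP n s u) (2^n) + PSum ζ (unifP n u t) (2^n))) atTop (nhds 0) := by
    rw [Metric.tendsto_atTop]
    intro ε hε
    obtain ⟨ε', hε'pos, hε'⟩ := eps_choice hθ
      (mul_nonneg (mul_nonneg (by norm_num) (mul_nonneg hC (Mθ_nonneg θ))) hωst :
        (0:ℝ) ≤ 2 * (C * Mθ θ) * ω s t) hε
    obtain ⟨h, hhpos, hmod⟩ := modulus hω hε'pos
    obtain ⟨N, hN0⟩ := pow_unbounded_of_one_lt ((t - s) / h) (by norm_num : (1:ℝ) < 2)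
    have hN : t - s ≤ h * 2 ^ N := by
      rw [div_lt_iff₀ hhpos] at hN0
      nlinarith
    refine ⟨N, ?_⟩
    intro n hn
    rw [dist_zero_right]
    have h2N : (2:ℝ)^N ≤ 2^n := pow_le_pow_right₀ (by norm_num) hn
    have hstep : (t - s)/2^n ≤ h := by
      rw [div_le_iff₀ (by positivity)]
      calc t - s ≤ h * 2^N := hN
        _ ≤ h * 2^n := mul_le_mul_of_nonneg_left h2N (le_of_lt hhpos)
    have hmeshc : ∀ j, j < 2^n + 2^n → ω (c n j) (c n (j+1)) ≤ ε' := by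
      intro j hj
      refine hmod _ _ (le_trans hs ((hcpart n).left_le (by omega))) ((hcpart n).2.2 j hj)
        (le_trans ((hcpart n).le_right (by omega)) ht) ?_
      have hdle : c n (j+1) - c n j ≤ (t - s)/2^n := by
        by_cases hile : j + 1 ≤ 2^n
        · simp only [hc]; rw [if_pos hile, if_pos (show j ≤ 2^n by omega)]
          have h1 := unifP_mesh (s := s) (t := u) n j
          rw [h1]
          gcongr
        · have hi2 : 2^n ≤ j := by omega
          obtain ⟨j', rfl⟩ : ∃ j', j = 2^n + j' := ⟨j - 2^n, by omega⟩
          rw [hcval n j' (by omega), show 2^n + j' + 1 = 2^n + (j'+1) by omega,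
            hcval n (j'+1) (by omega)]
          have h1 := unifP_mesh (s := u) (t := t) n j'
          rw [h1]
          gcongr
      linarith
    have hb := two_partitions hω hθ hC hδ (unifP_part n hst) (hcpart n) hs ht
      (le_of_lt hε'pos) (le_of_lt hε'pos)
      (unif_mesh_bound hω hs hst ht (le_of_lt hhpos) hmod hn hN) hmeshc
    rw [hcsum n] at hb
    exact lt_of_le_of_lt (le_trans hb (le_of_eq (by ring))) hε'
  have hlim2 : Tendsto (fun n => PSum ζ (unifP n s t) (2^n)
      - (PSum ζ (unifP n s u) (2^n) + PSum ζ (unifP n u t) (2^n))) atTop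
      (nhds (Z s t - (Z s u + Z u t))) :=
    (hconv s t hs hst ht).sub ((hconv s u hs hsu huT).add (hconv u t hu0 hut ht))
  exact sub_eq_zero.mp (tendsto_nhds_unique hlim2 hzero)

/-- an additive function bounded by `c ω^θ`, `θ > 1`, vanishes -/
theorem additive_null (hω : IsControl T ω) (hθ : 1 < θ) {c : ℝ} (hc : 0 ≤ c)
    {A : ℝ → ℝ → V}
    (hadd : ∀ s u t, 0 ≤ s → s ≤ u → u ≤ t → t ≤ T → A s t = A s u + A u t)
    (hb : ∀ s t, 0 ≤ s → s ≤ t → t ≤ T → ‖A s t‖ ≤ c * ω s t ^ θ) :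
    ∀ s t, 0 ≤ s → s ≤ t → t ≤ T → A s t = 0 := by
  intro s t hs hst ht
  have hωst : 0 ≤ ω s t := omega_nonneg hω hs hst ht
  -- A is additive over partitions
  have hpartsum : ∀ (k : ℕ) (π : ℕ → ℝ) (t' : ℝ), PPart s t' π k → t' ≤ T →
      A s t' = ∑ i ∈ Finset.range k, A (π i) (π (i+1)) := by
    intro k
    induction k with
    | zero =>
      intro π t' hp ht'
      have hst' : s = t' := by rw [← hp.1, hp.2.1]
      subst hst'
      have h0 := hadd s s s hs le_rfl le_rfl ht'
      simp only [Finset.range_zero, Finset.sum_empty]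
      have : A s s + A s s = A s s + 0 := by rw [add_zero]; exact h0.symm
      exact (add_left_cancel this)
    | succ n ih =>
      intro π t' hp ht'
      have hsub : PPart s (π n) π n := ⟨hp.1, rfl, fun i hi => hp.2.2 i (by omega)⟩
      have hπn : π n ≤ t' := hp.le_right (Nat.le_succ n)
      have h1 := ih π (π n) hsub (le_trans hπn ht')
      have h2 := hadd s (π n) t' hs (hp.left_le (by omega)) hπn ht'
      rw [Finset.sum_range_succ, ← h1, hp.2.1] at *
      rw [h2]
  rw [← norm_le_zero_iff]
  have hkey : ∀ ε : ℝ, 0 < ε → ‖A s t‖ ≤ ε := by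
    intro ε hε
    obtain ⟨ε', hε'pos, hε'⟩ := eps_choice hθ (mul_nonneg hc hωst : (0:ℝ) ≤ c * ω s t) hε
    obtain ⟨h, hhpos, hmod⟩ := modulus hω hε'pos
    obtain ⟨N, hN0⟩ := pow_unbounded_of_one_lt ((t - s) / h) (by norm_num : (1:ℝ) < 2)
    have hN : t - s ≤ h * 2 ^ N := by
      rw [div_lt_iff₀ hhpos] at hN0
      nlinarith
    have hmesh := unif_mesh_bound hω hs hst ht (le_of_lt hhpos) hmod (le_refl N) hN
    have hp := unifP_part N hst
    have hsum := hpartsum (2^N) (unifP N s t) t hp ht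
    rw [hsum]
    calc ‖∑ i ∈ Finset.range (2^N), A (unifP N s t i) (unifP N s t (i+1))‖
        ≤ ∑ i ∈ Finset.range (2^N), ‖A (unifP N s t i) (unifP N s t (i+1))‖ := norm_sum_le _ _
      _ ≤ ∑ i ∈ Finset.range (2^N), c * (ε' ^ (θ-1) * ω (unifP N s t i) (unifP N s t (i+1))) := by
          apply Finset.sum_le_sum
          intro i hi
          have hik := Finset.mem_range.mp hi
          have h0i : 0 ≤ unifP N s t i := le_trans hs (hp.left_le (by omega))
          have hiT : unifP N s t (i+1) ≤ T := le_trans (hp.le_right (by omega)) ht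
          refine le_trans (hb _ _ h0i (hp.2.2 i hik) hiT) ?_
          exact mul_le_mul_of_nonneg_left
            (rpow_theta_le hθ (omega_nonneg hω h0i (hp.2.2 i hik) hiT) (hmesh i hik)) hc
      _ = c * ε' ^ (θ-1) * ∑ i ∈ Finset.range (2^N), ω (unifP N s t i) (unifP N s t (i+1)) := by
          simp only [Finset.mul_sum]
          apply Finset.sum_congr rfl
          intro i _; ring
      _ ≤ c * ε' ^ (θ-1) * ω s t := by
          apply mul_le_mul_of_nonneg_left (chain_sum hω hp hs ht)
          positivity
      _ ≤ ε := le_of_lt (lt_of_le_of_lt (le_of_eq (by ring)) hε')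
  by_contra hne
  push_neg at hne
  exact absurd (hkey (‖A s t‖/2) (by linarith)) (by linarith)

end Sewing

end SewingProof


open SewingProof

/-- level-2 non-commutative sewing lemma: an almost rough path
`(z̃¹, z̃²)` of finite `p`-variation, `2 ≤ p < 3`, is associated with a unique pair
`(z¹, z²)` satisfying the exact Chen relations and staying at distance `C′ ω(s,t)^θ`
from `(z̃¹, z̃²)`. -/
theorem sewing_lemma_level2 {m : ℕ} (p θ T C K : ℝ)
    (hp2 : 2 ≤ p) (hp3 : p < 3) (hθ : 1 < θ) (hT : 0 < T) (hC : 0 ≤ C) (hK : 0 ≤ K)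
    (ω : ℝ → ℝ → ℝ) (hω : IsControl T ω)
    (z1 : ℝ → ℝ → E m) (z2 : ℝ → ℝ → EuclideanSpace ℝ (Fin m × Fin m))
    (hb1 : ∀ s t, 0 ≤ s → s ≤ t → t ≤ T → ‖z1 s t‖ ≤ K * ω s t ^ (1 / p))
    (hb2 : ∀ s t, 0 ≤ s → s ≤ t → t ≤ T → ‖z2 s t‖ ≤ K * ω s t ^ (2 / p))
    (ha1 : ∀ s u t, 0 ≤ s → s ≤ u → u ≤ t → t ≤ T →
      ‖z1 s t - z1 s u - z1 u t‖ ≤ C * ω s t ^ θ)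
    (ha2 : ∀ s u t, 0 ≤ s → s ≤ u → u ≤ t → t ≤ T →
      ‖z2 s t - z2 s u - z2 u t - tensor (z1 s u) (z1 u t)‖ ≤ C * ω s t ^ θ) :
    ∃ (Z1 : ℝ → ℝ → E m) (Z2 : ℝ → ℝ → EuclideanSpace ℝ (Fin m × Fin m)),
      (∀ s u t, 0 ≤ s → s ≤ u → u ≤ t → t ≤ T →
        Z1 s t = Z1 s u + Z1 u t ∧
        Z2 s t = Z2 s u + Z2 u t + tensor (Z1 s u) (Z1 u t)) ∧
      (∃ C' : ℝ, 0 ≤ C' ∧ ∀ s t, 0 ≤ s → s ≤ t → t ≤ T →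
        ‖Z1 s t - z1 s t‖ ≤ C' * ω s t ^ θ ∧ ‖Z2 s t - z2 s t‖ ≤ C' * ω s t ^ θ) ∧
      (∀ (W1 : ℝ → ℝ → E m) (W2 : ℝ → ℝ → EuclideanSpace ℝ (Fin m × Fin m)),
        (∀ s u t, 0 ≤ s → s ≤ u → u ≤ t → t ≤ T →
          W1 s t = W1 s u + W1 u t ∧
          W2 s t = W2 s u + W2 u t + tensor (W1 s u) (W1 u t)) →
        (∃ C'' : ℝ, 0 ≤ C'' ∧ ∀ s t, 0 ≤ s → s ≤ t → t ≤ T →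
          ‖W1 s t - z1 s t‖ ≤ C'' * ω s t ^ θ ∧ ‖W2 s t - z2 s t‖ ≤ C'' * ω s t ^ θ) →
        ∀ s t, 0 ≤ s → s ≤ t → t ≤ T → W1 s t = Z1 s t ∧ W2 s t = Z2 s t) := by
  classical
  have hp0 : 0 < p := by linarith
  have hT0 : (0:ℝ) ≤ T := le_of_lt hT
  have hω0T : 0 ≤ ω 0 T := omega_nonneg hω le_rfl hT0 le_rfl
  -- Step 1: sew the first level
  obtain ⟨Z1, hZ1add, hZ1close⟩ := sewing_exists hω hθ hC ha1
  set C₁ := C * Mθ θ with hC₁def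
  have hC₁0 : 0 ≤ C₁ := mul_nonneg hC (Mθ_nonneg θ)
  -- h is the one-variable primitive of Z1
  set h : ℝ → E m := fun s => Z1 0 s with hhdef
  have hZ1st : ∀ s t, 0 ≤ s → s ≤ t → t ≤ T → Z1 s t = h t - h s := by
    intro s t hs hst ht
    have h1 := hZ1add 0 s t le_rfl hs hst ht
    exact eq_sub_of_add_eq' h1.symm
  have hrp1 : (0:ℝ) ≤ ω 0 T ^ (1/p) := Real.rpow_nonneg hω0T _
  have hrpθ : (0:ℝ) ≤ ω 0 T ^ θ := Real.rpow_nonneg hω0T _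
  set Hb := K * ω 0 T ^ (1/p) + C₁ * ω 0 T ^ θ with hHbdef
  have hHb0 : 0 ≤ Hb :=
    add_nonneg (mul_nonneg hK hrp1) (mul_nonneg hC₁0 hrpθ)
  have hhb : ∀ s, 0 ≤ s → s ≤ T → ‖h s‖ ≤ Hb := by
    intro s hs hsT
    have h1 := hb1 0 s le_rfl hs hsT
    have h2 := hZ1close 0 s le_rfl hs hsT
    have hm : ω 0 s ≤ ω 0 T := omega_mono hω le_rfl le_rfl hs hsT le_rfl
    have hω0s : 0 ≤ ω 0 s := omega_nonneg hω le_rfl hs hsT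
    have e1 : ω 0 s ^ (1/p) ≤ ω 0 T ^ (1/p) := Real.rpow_le_rpow hω0s hm (by positivity)
    have e2 : ω 0 s ^ θ ≤ ω 0 T ^ θ := Real.rpow_le_rpow hω0s hm (by linarith)
    calc ‖h s‖ = ‖z1 0 s + (Z1 0 s - z1 0 s)‖ := by
          simp only [hhdef]; congr 1; abel
      _ ≤ ‖z1 0 s‖ + ‖Z1 0 s - z1 0 s‖ := norm_add_le _ _
      _ ≤ K * ω 0 s ^ (1/p) + C₁ * ω 0 s ^ θ := add_le_add h1 h2
      _ ≤ Hb := add_le_add (mul_le_mul_of_nonneg_left e1 hK)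
          (mul_le_mul_of_nonneg_left e2 hC₁0)
  -- Step 2: the corrected second-level germ
  set B : ℝ → ℝ → EuclideanSpace ℝ (Fin m × Fin m) :=
    fun s t => z2 s t + tensor (h s) (z1 s t) with hBdef
  have hkey : ∀ s u t, 0 ≤ s → s ≤ u → u ≤ t → t ≤ T →
      B s t - B s u - B u t
        = (z2 s t - z2 s u - z2 u t - tensor (z1 s u) (z1 u t))
          + tensor (z1 s u - Z1 s u) (z1 u t)
          + tensor (h s) (z1 s t - z1 s u - z1 u t) := by
    intro s u t hs hsu hut ht
    have h1 : Z1 s u = h u - h s := hZ1st s u hs hsu (le_trans hut ht)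
    ext q
    have h1q : Z1 s u q.1 = h u q.1 - h s q.1 := by rw [h1]; rfl
    simp only [hBdef, tensor, PiLp.sub_apply, PiLp.add_apply, PiLp.toLp_apply]
    rw [h1q]
    ring
  set C₂ := C + C₁ * (K * ω 0 T ^ (1/p)) + Hb * C with hC₂def
  have hC₂0 : 0 ≤ C₂ :=
    add_nonneg (add_nonneg hC (mul_nonneg hC₁0 (mul_nonneg hK hrp1))) (mul_nonneg hHb0 hC)
  have hδB : ∀ s u t, 0 ≤ s → s ≤ u → u ≤ t → t ≤ T →
      ‖B s t - B s u - B u t‖ ≤ C₂ * ω s t ^ θ := by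
    intro s u t hs hsu hut ht
    have hu0 : 0 ≤ u := le_trans hs hsu
    have huT : u ≤ T := le_trans hut ht
    have hst : s ≤ t := le_trans hsu hut
    have hωst : 0 ≤ ω s t := omega_nonneg hω hs hst ht
    have hωsu : 0 ≤ ω s u := omega_nonneg hω hs hsu huT
    have hωut : 0 ≤ ω u t := omega_nonneg hω hu0 hut ht
    have hm1 : ω s u ≤ ω s t := omega_mono hω hs le_rfl hsu hut ht
    have hm2 : ω u t ≤ ω 0 T := omega_mono hω le_rfl hu0 hut ht le_rfl
    have e1 : ω s u ^ θ ≤ ω s t ^ θ := Real.rpow_le_rpow hωsu hm1 (by linarith)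
    have e2 : ω u t ^ (1/p) ≤ ω 0 T ^ (1/p) := Real.rpow_le_rpow hωut hm2 (by positivity)
    rw [hkey s u t hs hsu hut ht]
    have hX := ha2 s u t hs hsu hut ht
    have hY : ‖tensor (z1 s u - Z1 s u) (z1 u t)‖
        ≤ C₁ * ω s t ^ θ * (K * ω 0 T ^ (1/p)) := by
      rw [tensor_norm]
      have hy1 : ‖z1 s u - Z1 s u‖ ≤ C₁ * ω s t ^ θ := by
        rw [norm_sub_rev]
        exact le_trans (hZ1close s u hs hsu huT)
          (mul_le_mul_of_nonneg_left e1 hC₁0)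
      have hy2 : ‖z1 u t‖ ≤ K * ω 0 T ^ (1/p) :=
        le_trans (hb1 u t hu0 hut ht) (mul_le_mul_of_nonneg_left e2 hK)
      exact mul_le_mul hy1 hy2 (norm_nonneg _)
        (mul_nonneg hC₁0 (Real.rpow_nonneg hωst θ))
    have hW : ‖tensor (h s) (z1 s t - z1 s u - z1 u t)‖ ≤ Hb * (C * ω s t ^ θ) := by
      rw [tensor_norm]
      exact mul_le_mul (hhb s hs (le_trans hst ht)) (ha1 s u t hs hsu hut ht)
        (norm_nonneg _) hHb0
    calc ‖(z2 s t - z2 s u - z2 u t - tensor (z1 s u) (z1 u t))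
          + tensor (z1 s u - Z1 s u) (z1 u t)
          + tensor (h s) (z1 s t - z1 s u - z1 u t)‖
        ≤ ‖z2 s t - z2 s u - z2 u t - tensor (z1 s u) (z1 u t)‖
          + ‖tensor (z1 s u - Z1 s u) (z1 u t)‖
          + ‖tensor (h s) (z1 s t - z1 s u - z1 u t)‖ := norm_add₃_le
      _ ≤ C * ω s t ^ θ + C₁ * ω s t ^ θ * (K * ω 0 T ^ (1/p)) + Hb * (C * ω s t ^ θ) :=
          add_le_add (add_le_add hX hY) hW
      _ = C₂ * ω s t ^ θ := by rw [hC₂def]; ring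
  -- Step 3: sew the corrected germ
  obtain ⟨G, hGadd, hGclose⟩ := sewing_exists hω hθ hC₂0 hδB
  set C₃ := C₂ * Mθ θ with hC₃def
  have hC₃0 : 0 ≤ C₃ := mul_nonneg hC₂0 (Mθ_nonneg θ)
  set Z2 : ℝ → ℝ → EuclideanSpace ℝ (Fin m × Fin m) :=
    fun s t => G s t - tensor (h s) (Z1 s t) with hZ2def
  -- Chen relation for Z2
  have hchen2 : ∀ s u t, 0 ≤ s → s ≤ u → u ≤ t → t ≤ T →
      Z2 s t = Z2 s u + Z2 u t + tensor (Z1 s u) (Z1 u t) := by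
    intro s u t hs hsu hut ht
    have hu0 : 0 ≤ u := le_trans hs hsu
    have huT : u ≤ T := le_trans hut ht
    have hst : s ≤ t := le_trans hsu hut
    have h1 : Z1 s u = h u - h s := hZ1st s u hs hsu huT
    have h2 : Z1 u t = h t - h u := hZ1st u t hu0 hut ht
    have h3 : Z1 s t = h t - h s := hZ1st s t hs hst ht
    simp only [hZ2def]
    rw [hGadd s u t hs hsu hut ht]
    ext q
    have h1q1 : Z1 s u q.1 = h u q.1 - h s q.1 := by rw [h1]; rfl
    have h1q2 : Z1 s u q.2 = h u q.2 - h s q.2 := by rw [h1]; rfl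
    have h2q2 : Z1 u t q.2 = h t q.2 - h u q.2 := by rw [h2]; rfl
    have h3q2 : Z1 s t q.2 = h t q.2 - h s q.2 := by rw [h3]; rfl
    simp only [tensor, PiLp.sub_apply, PiLp.add_apply, PiLp.toLp_apply]
    rw [h1q1, h1q2, h2q2, h3q2]
    ring
  -- distance estimate for Z2
  have hZ2close : ∀ s t, 0 ≤ s → s ≤ t → t ≤ T →
      ‖Z2 s t - z2 s t‖ ≤ (C₃ + Hb * C₁) * ω s t ^ θ := by
    intro s t hs hst ht
    have hdec : Z2 s t - z2 s t = (G s t - B s t) + tensor (h s) (z1 s t - Z1 s t) := by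
      ext q
      simp only [hZ2def, hBdef, tensor, PiLp.sub_apply, PiLp.add_apply, PiLp.toLp_apply]
      ring
    rw [hdec]
    have hgb := hGclose s t hs hst ht
    have ht2 : ‖tensor (h s) (z1 s t - Z1 s t)‖ ≤ Hb * (C₁ * ω s t ^ θ) := by
      rw [tensor_norm]
      refine mul_le_mul (hhb s hs (le_trans hst ht)) ?_ (norm_nonneg _) hHb0
      rw [norm_sub_rev]
      exact hZ1close s t hs hst ht
    calc ‖(G s t - B s t) + tensor (h s) (z1 s t - Z1 s t)‖
        ≤ ‖G s t - B s t‖ + ‖tensor (h s) (z1 s t - Z1 s t)‖ := norm_add_le _ _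
      _ ≤ C₃ * ω s t ^ θ + Hb * (C₁ * ω s t ^ θ) := add_le_add hgb ht2
      _ = (C₃ + Hb * C₁) * ω s t ^ θ := by ring
  set C' := C₁ + (C₃ + Hb * C₁) with hC'def
  have hC'0 : 0 ≤ C' := add_nonneg hC₁0 (add_nonneg hC₃0 (mul_nonneg hHb0 hC₁0))
  refine ⟨Z1, Z2, ?_, ⟨C', hC'0, ?_⟩, ?_⟩
  · intro s u t hs hsu hut ht
    exact ⟨hZ1add s u t hs hsu hut ht, hchen2 s u t hs hsu hut ht⟩
  · intro s t hs hst ht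
    have hωθ : 0 ≤ ω s t ^ θ := Real.rpow_nonneg (omega_nonneg hω hs hst ht) θ
    constructor
    · refine le_trans (hZ1close s t hs hst ht) ?_
      apply mul_le_mul_of_nonneg_right _ hωθ
      rw [hC'def]
      have : 0 ≤ C₃ + Hb * C₁ := add_nonneg hC₃0 (mul_nonneg hHb0 hC₁0)
      linarith
    · refine le_trans (hZ2close s t hs hst ht) ?_
      apply mul_le_mul_of_nonneg_right _ hωθ
      rw [hC'def]
      linarith
  -- uniqueness
  · intro W1 W2 hWchen hWclose
    obtain ⟨C'', hC''0, hWb⟩ := hWclose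
    have hW1eq : ∀ s t, 0 ≤ s → s ≤ t → t ≤ T → W1 s t = Z1 s t := by
      have hAadd : ∀ s u t, 0 ≤ s → s ≤ u → u ≤ t → t ≤ T →
          W1 s t - Z1 s t = (W1 s u - Z1 s u) + (W1 u t - Z1 u t) := by
        intro s u t hs hsu hut ht
        rw [(hWchen s u t hs hsu hut ht).1, hZ1add s u t hs hsu hut ht]
        abel
      have hAb : ∀ s t, 0 ≤ s → s ≤ t → t ≤ T →
          ‖W1 s t - Z1 s t‖ ≤ (C'' + C') * ω s t ^ θ := by
        intro s t hs hst ht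
        calc ‖W1 s t - Z1 s t‖ = ‖(W1 s t - z1 s t) - (Z1 s t - z1 s t)‖ := by congr 1; abel
          _ ≤ ‖W1 s t - z1 s t‖ + ‖Z1 s t - z1 s t‖ := norm_sub_le _ _
          _ ≤ C'' * ω s t ^ θ + C' * ω s t ^ θ := by
              refine add_le_add (hWb s t hs hst ht).1 ?_
              refine le_trans (hZ1close s t hs hst ht) ?_
              apply mul_le_mul_of_nonneg_right _
                (Real.rpow_nonneg (omega_nonneg hω hs hst ht) θ)
              rw [hC'def]
              have : 0 ≤ C₃ + Hb * C₁ := add_nonneg hC₃0 (mul_nonneg hHb0 hC₁0)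
              linarith
          _ = (C'' + C') * ω s t ^ θ := by ring
      intro s t hs hst ht
      have := additive_null hω hθ (add_nonneg hC''0 hC'0) hAadd hAb s t hs hst ht
      exact sub_eq_zero.mp this
    have hW2eq : ∀ s t, 0 ≤ s → s ≤ t → t ≤ T → W2 s t = Z2 s t := by
      have hAadd : ∀ s u t, 0 ≤ s → s ≤ u → u ≤ t → t ≤ T →
          W2 s t - Z2 s t = (W2 s u - Z2 s u) + (W2 u t - Z2 u t) := by
        intro s u t hs hsu hut ht
        rw [(hWchen s u t hs hsu hut ht).2, hchen2 s u t hs hsu hut ht,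
          hW1eq s u hs hsu (le_trans hut ht), hW1eq u t (le_trans hs hsu) hut ht]
        abel
      have hAb : ∀ s t, 0 ≤ s → s ≤ t → t ≤ T →
          ‖W2 s t - Z2 s t‖ ≤ (C'' + C') * ω s t ^ θ := by
        intro s t hs hst ht
        calc ‖W2 s t - Z2 s t‖ = ‖(W2 s t - z2 s t) - (Z2 s t - z2 s t)‖ := by congr 1; abel
          _ ≤ ‖W2 s t - z2 s t‖ + ‖Z2 s t - z2 s t‖ := norm_sub_le _ _
          _ ≤ C'' * ω s t ^ θ + C' * ω s t ^ θ := by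
              refine add_le_add (hWb s t hs hst ht).2 ?_
              refine le_trans (hZ2close s t hs hst ht) ?_
              apply mul_le_mul_of_nonneg_right _
                (Real.rpow_nonneg (omega_nonneg hω hs hst ht) θ)
              rw [hC'def]
              linarith
          _ = (C'' + C') * ω s t ^ θ := by ring
      intro s t hs hst ht
      have := additive_null hω hθ (add_nonneg hC''0 hC'0) hAadd hAb s t hs hst ht
      exact sub_eq_zero.mp this
    intro s t hs hst ht
    exact ⟨hW1eq s t hs hst ht, hW2eq s t hs hst ht⟩
end
end

section
/- There exists a constant C > 0 such that for all z, z′ ∈ ℝ^d ∖ {0}: ‖DΘ(z) − DΘ(z′)‖_op ≤ C ‖z − z′‖ / (‖z‖ ‖z′‖) and ‖DR(z) − DR(z′)‖_op ≤ C ‖z − z′‖ / (‖z‖ ‖z′‖), where Θ(z) = z/‖z‖ and R(z) = log‖z‖ (Euclidean norm) and DΘ, DR denote their Fréchet derivatives. -/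
set_option maxHeartbeats 1000000
set_option synthInstance.maxHeartbeats 1000000

noncomputable section

/-- The angular part `Θ(z) = z / ‖z‖` of the polar-logarithmic change of variable. -/
def thetaMap (d : ℕ) (z : E d) : E d := ‖z‖⁻¹ • z

/-- The radial part `R(z) = log ‖z‖` of the polar-logarithmic change of variable. -/
def logMap (d : ℕ) (z : E d) : ℝ := Real.log ‖z‖

/-- The polar-logarithmic change of variable `φ(z) = (z/‖z‖, log ‖z‖)`. -/
def phiMap (d : ℕ) (z : E d) : E d × ℝ := (thetaMap d z, logMap d z)

namespace PolarAux

variable {d : ℕ}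

/-- unit vector in direction z -/
def uVec (d : ℕ) (z : E d) : E d := ‖z‖⁻¹ • z

lemma norm_uVec {z : E d} (hz : z ≠ 0) : ‖uVec d z‖ = 1 := by
  have ha : (0:ℝ) < ‖z‖ := norm_pos_iff.mpr hz
  simp [uVec, norm_smul, abs_of_pos (inv_pos.mpr ha), inv_mul_cancel₀ ha.ne']

/-- derivative of the norm at z ≠ 0 -/
lemma hasFDerivAt_norm' {z : E d} (hz : z ≠ 0) :
    HasFDerivAt (fun x : E d => ‖x‖) (‖z‖⁻¹ • innerSL ℝ z) z := by
  have ha : (0:ℝ) < ‖z‖ := norm_pos_iff.mpr hz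
  have h1 : HasFDerivAt (fun x : E d => ‖x‖ ^ 2) (2 • innerSL ℝ z) z :=
    (hasStrictFDerivAt_norm_sq z).hasFDerivAt
  have h2 : HasDerivAt Real.sqrt (1 / (2 * Real.sqrt (‖z‖ ^ 2))) (‖z‖ ^ 2) :=
    Real.hasDerivAt_sqrt (by positivity)
  have h3 := h2.comp_hasFDerivAt z h1
  have hs : Real.sqrt (‖z‖ ^ 2) = ‖z‖ := Real.sqrt_sq (norm_nonneg z)
  have heq : (fun x : E d => Real.sqrt (‖x‖ ^ 2)) = fun x : E d => ‖x‖ := by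
    funext x; exact Real.sqrt_sq (norm_nonneg x)
  simp only [Function.comp_def] at h3
  rw [heq] at h3
  refine h3.congr_fderiv ?_
  rw [hs]
  refine ContinuousLinearMap.ext fun v => ?_
  simp [smul_smul]
  ring

lemma innerSL_uVec (z : E d) : innerSL ℝ (uVec d z) = ‖z‖⁻¹ • innerSL ℝ z := by
  refine ContinuousLinearMap.ext fun v => ?_
  simp [uVec, real_inner_smul_left]

lemma fderiv_logMap {z : E d} (hz : z ≠ 0) :
    fderiv ℝ (logMap d) z = ‖z‖⁻¹ • innerSL ℝ (uVec d z) := by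
  have ha : (0:ℝ) < ‖z‖ := norm_pos_iff.mpr hz
  have h4 : HasDerivAt Real.log ‖z‖⁻¹ ‖z‖ := Real.hasDerivAt_log ha.ne'
  have h5 := h4.comp_hasFDerivAt z (hasFDerivAt_norm' hz)
  have : HasFDerivAt (logMap d) (‖z‖⁻¹ • (‖z‖⁻¹ • innerSL ℝ z)) z := by
    unfold logMap; simp only [Function.comp_def] at h5; exact h5
  rw [this.fderiv, innerSL_uVec]

/-- the projection-type operator appearing in DΘ -/
def P (d : ℕ) (u : E d) : E d →L[ℝ] E d :=
  ContinuousLinearMap.id ℝ (E d) - (innerSL ℝ u).smulRight u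

lemma fderiv_thetaMap {z : E d} (hz : z ≠ 0) :
    fderiv ℝ (thetaMap d) z = ‖z‖⁻¹ • P d (uVec d z) := by
  have ha : (0:ℝ) < ‖z‖ := norm_pos_iff.mpr hz
  have hinv : HasDerivAt (fun t : ℝ => t⁻¹) (-(‖z‖ ^ 2)⁻¹) ‖z‖ := hasDerivAt_inv ha.ne'
  have hc := hinv.comp_hasFDerivAt z (hasFDerivAt_norm' hz)
  have hθ := hc.smul (hasFDerivAt_id z)
  have hfun : HasFDerivAt (thetaMap d)
      (((fun t : ℝ => t⁻¹) ∘ norm) z • ContinuousLinearMap.id ℝ (E d) +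
        ((-(‖z‖ ^ 2)⁻¹ • ‖z‖⁻¹ • innerSL ℝ z).smulRight (id z))) z := by
    have heq : (fun y : E d => ((fun t : ℝ => t⁻¹) ∘ norm) y • id y) = thetaMap d := by
      funext x; simp [thetaMap, Function.comp_def]
    rw [← heq]
    exact hθ
  have hD : ((fun t : ℝ => t⁻¹) ∘ norm) z • ContinuousLinearMap.id ℝ (E d) +
        ((-(‖z‖ ^ 2)⁻¹ • ‖z‖⁻¹ • innerSL ℝ z).smulRight (id z))
      = ‖z‖⁻¹ • P d (uVec d z) := by
    refine ContinuousLinearMap.ext fun v => ?_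
    simp only [P, uVec, ContinuousLinearMap.smul_apply, ContinuousLinearMap.sub_apply,
      ContinuousLinearMap.id_apply, ContinuousLinearMap.smulRight_apply,
      ContinuousLinearMap.add_apply, Function.comp_apply,
      innerSL_apply_apply, real_inner_smul_left, ContinuousLinearMap.coe_smul',
      Pi.smul_apply, id_eq]
    rw [smul_sub]
    match_scalars
    · ring
    · field_simp
      simp only [smul_eq_mul]; field_simp
  rw [hD] at hfun
  rw [hfun.fderiv]

lemma norm_inv_sub_inv {z z' : E d} (hz : z ≠ 0) (hz' : z' ≠ 0) :
    |‖z‖⁻¹ - ‖z'‖⁻¹| ≤ ‖z - z'‖ / (‖z‖ * ‖z'‖) := by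
  have ha : (0:ℝ) < ‖z‖ := norm_pos_iff.mpr hz
  have hb : (0:ℝ) < ‖z'‖ := norm_pos_iff.mpr hz'
  have h : ‖z‖⁻¹ - ‖z'‖⁻¹ = (‖z'‖ - ‖z‖) / (‖z‖ * ‖z'‖) := by field_simp
  rw [h, abs_div, abs_of_pos (mul_pos ha hb)]
  gcongr
  calc |‖z'‖ - ‖z‖| ≤ ‖z' - z‖ := abs_norm_sub_norm_le z' z
    _ = ‖z - z'‖ := by rw [norm_sub_rev]

lemma norm_uVec_sub {z z' : E d} (hz : z ≠ 0) (hz' : z' ≠ 0) :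
    ‖uVec d z - uVec d z'‖ ≤ 2 * ‖z - z'‖ / ‖z‖ := by
  have ha : (0:ℝ) < ‖z‖ := norm_pos_iff.mpr hz
  have hb : (0:ℝ) < ‖z'‖ := norm_pos_iff.mpr hz'
  have hdecomp : uVec d z - uVec d z' = ‖z‖⁻¹ • (z - z') + (‖z‖⁻¹ - ‖z'‖⁻¹) • z' := by
    simp only [uVec, smul_sub, sub_smul]; abel
  calc ‖uVec d z - uVec d z'‖ ≤ ‖‖z‖⁻¹ • (z - z')‖ + ‖(‖z‖⁻¹ - ‖z'‖⁻¹) • z'‖ := by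
        rw [hdecomp]; exact norm_add_le _ _
    _ = ‖z‖⁻¹ * ‖z - z'‖ + |‖z‖⁻¹ - ‖z'‖⁻¹| * ‖z'‖ := by
        rw [norm_smul, norm_smul, Real.norm_eq_abs, Real.norm_eq_abs,
          abs_of_pos (inv_pos.mpr ha)]
    _ ≤ ‖z‖⁻¹ * ‖z - z'‖ + (‖z - z'‖ / (‖z‖ * ‖z'‖)) * ‖z'‖ :=
        add_le_add le_rfl (mul_le_mul_of_nonneg_right (norm_inv_sub_inv hz hz') hb.le)
    _ = 2 * ‖z - z'‖ / ‖z‖ := by field_simp; ring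

lemma norm_P_apply_le {u : E d} (hu : ‖u‖ = 1) (v : E d) : ‖P d u v‖ ≤ 2 * ‖v‖ := by
  simp only [P, ContinuousLinearMap.sub_apply, ContinuousLinearMap.id_apply,
    ContinuousLinearMap.smulRight_apply, innerSL_apply_apply]
  calc ‖v - (inner ℝ u v : ℝ) • u‖ ≤ ‖v‖ + ‖(inner ℝ u v : ℝ) • u‖ := norm_sub_le _ _
    _ = ‖v‖ + |(inner ℝ u v : ℝ)| * ‖u‖ := by rw [norm_smul, Real.norm_eq_abs]
    _ ≤ ‖v‖ + (‖u‖ * ‖v‖) * ‖u‖ := by gcongr; exact abs_real_inner_le_norm u v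
    _ = 2 * ‖v‖ := by rw [hu]; ring

lemma norm_P_sub_apply_le {u u' : E d} (hu : ‖u‖ = 1) (hu' : ‖u'‖ = 1) (v : E d) :
    ‖P d u v - P d u' v‖ ≤ 2 * ‖u - u'‖ * ‖v‖ := by
  have key : P d u v - P d u' v = (inner ℝ (u' - u) v : ℝ) • u + (inner ℝ u' v : ℝ) • (u' - u) := by
    simp only [P, ContinuousLinearMap.sub_apply, ContinuousLinearMap.id_apply,
      ContinuousLinearMap.smulRight_apply, innerSL_apply_apply, inner_sub_left]
    rw [sub_smul, smul_sub]
    abel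
  rw [key]
  have hn : ‖u' - u‖ = ‖u - u'‖ := norm_sub_rev _ _
  calc ‖(inner ℝ (u' - u) v : ℝ) • u + (inner ℝ u' v : ℝ) • (u' - u)‖
      ≤ ‖(inner ℝ (u' - u) v : ℝ) • u‖ + ‖(inner ℝ u' v : ℝ) • (u' - u)‖ := norm_add_le _ _
    _ = |(inner ℝ (u' - u) v : ℝ)| * ‖u‖ + |(inner ℝ u' v : ℝ)| * ‖u' - u‖ := by
        rw [norm_smul, norm_smul, Real.norm_eq_abs, Real.norm_eq_abs]
    _ ≤ (‖u' - u‖ * ‖v‖) * ‖u‖ + (‖u'‖ * ‖v‖) * ‖u' - u‖ := by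
        gcongr
        · exact abs_real_inner_le_norm _ _
        · exact abs_real_inner_le_norm _ _
    _ = 2 * ‖u - u'‖ * ‖v‖ := by rw [hu, hu', hn]; ring

end PolarAux

open PolarAux in
theorem polar_log_fderiv_diff_bound (d : ℕ) :
    ∃ C : ℝ, 0 < C ∧ ∀ z z' : E d, z ≠ 0 → z' ≠ 0 →
      ‖fderiv ℝ (thetaMap d) z - fderiv ℝ (thetaMap d) z'‖ ≤ C * ‖z - z'‖ / (‖z‖ * ‖z'‖) ∧
      ‖fderiv ℝ (logMap d) z - fderiv ℝ (logMap d) z'‖ ≤ C * ‖z - z'‖ / (‖z‖ * ‖z'‖) := by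
  refine ⟨6, by norm_num, fun z z' hz hz' => ?_⟩
  have ha : (0:ℝ) < ‖z‖ := norm_pos_iff.mpr hz
  have hb : (0:ℝ) < ‖z'‖ := norm_pos_iff.mpr hz'
  have hu : ‖uVec d z‖ = 1 := norm_uVec hz
  have hu' : ‖uVec d z'‖ = 1 := norm_uVec hz'
  have huu' : ‖uVec d z - uVec d z'‖ ≤ 2 * ‖z - z'‖ / ‖z‖ := norm_uVec_sub hz hz'
  have hinv : |‖z‖⁻¹ - ‖z'‖⁻¹| ≤ ‖z - z'‖ / (‖z‖ * ‖z'‖) := norm_inv_sub_inv hz hz'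
  have hC : (0:ℝ) ≤ 6 * ‖z - z'‖ / (‖z‖ * ‖z'‖) := by positivity
  constructor
  · -- theta part
    rw [fderiv_thetaMap hz, fderiv_thetaMap hz']
    refine ContinuousLinearMap.opNorm_le_bound _ hC fun v => ?_
    have hpt : (‖z‖⁻¹ • P d (uVec d z) - ‖z'‖⁻¹ • P d (uVec d z')) v
        = (‖z‖⁻¹ - ‖z'‖⁻¹) • P d (uVec d z) v
          + ‖z'‖⁻¹ • (P d (uVec d z) v - P d (uVec d z') v) := by
      simp only [ContinuousLinearMap.sub_apply, ContinuousLinearMap.smul_apply]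
      rw [sub_smul, smul_sub]
      abel
    rw [hpt]
    calc ‖(‖z‖⁻¹ - ‖z'‖⁻¹) • P d (uVec d z) v
          + ‖z'‖⁻¹ • (P d (uVec d z) v - P d (uVec d z') v)‖
        ≤ ‖(‖z‖⁻¹ - ‖z'‖⁻¹) • P d (uVec d z) v‖
          + ‖‖z'‖⁻¹ • (P d (uVec d z) v - P d (uVec d z') v)‖ := norm_add_le _ _
      _ = |‖z‖⁻¹ - ‖z'‖⁻¹| * ‖P d (uVec d z) v‖
          + ‖z'‖⁻¹ * ‖P d (uVec d z) v - P d (uVec d z') v‖ := by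
          rw [norm_smul, norm_smul, Real.norm_eq_abs, Real.norm_eq_abs,
            abs_of_pos (inv_pos.mpr hb)]
      _ ≤ (‖z - z'‖ / (‖z‖ * ‖z'‖)) * (2 * ‖v‖)
          + ‖z'‖⁻¹ * (2 * (2 * ‖z - z'‖ / ‖z‖) * ‖v‖) := by
          refine add_le_add (mul_le_mul hinv (norm_P_apply_le hu v) (norm_nonneg _)
            (by positivity)) (mul_le_mul_of_nonneg_left ?_ (inv_pos.mpr hb).le)
          calc ‖P d (uVec d z) v - P d (uVec d z') v‖
              ≤ 2 * ‖uVec d z - uVec d z'‖ * ‖v‖ := norm_P_sub_apply_le hu hu' v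
            _ ≤ 2 * (2 * ‖z - z'‖ / ‖z‖) * ‖v‖ := by
                have := mul_le_mul_of_nonneg_left huu' (by norm_num : (0:ℝ) ≤ 2)
                exact mul_le_mul_of_nonneg_right this (norm_nonneg v)
      _ = 6 * ‖z - z'‖ / (‖z‖ * ‖z'‖) * ‖v‖ := by field_simp; ring
  · -- log part
    rw [fderiv_logMap hz, fderiv_logMap hz']
    refine ContinuousLinearMap.opNorm_le_bound _ hC fun v => ?_
    have hpt : (‖z‖⁻¹ • innerSL ℝ (uVec d z) - ‖z'‖⁻¹ • innerSL ℝ (uVec d z')) v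
        = (‖z‖⁻¹ - ‖z'‖⁻¹) * (inner ℝ (uVec d z) v : ℝ)
          + ‖z'‖⁻¹ * (inner ℝ (uVec d z - uVec d z') v : ℝ) := by
      simp only [ContinuousLinearMap.sub_apply, ContinuousLinearMap.smul_apply,
        innerSL_apply_apply, inner_sub_left, smul_eq_mul]
      ring
    rw [hpt]
    calc ‖(‖z‖⁻¹ - ‖z'‖⁻¹) * (inner ℝ (uVec d z) v : ℝ)
          + ‖z'‖⁻¹ * (inner ℝ (uVec d z - uVec d z') v : ℝ)‖
        ≤ ‖(‖z‖⁻¹ - ‖z'‖⁻¹) * (inner ℝ (uVec d z) v : ℝ)‖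
          + ‖‖z'‖⁻¹ * (inner ℝ (uVec d z - uVec d z') v : ℝ)‖ := norm_add_le _ _
      _ = |‖z‖⁻¹ - ‖z'‖⁻¹| * |(inner ℝ (uVec d z) v : ℝ)|
          + ‖z'‖⁻¹ * |(inner ℝ (uVec d z - uVec d z') v : ℝ)| := by
          rw [Real.norm_eq_abs, Real.norm_eq_abs, abs_mul, abs_mul,
            abs_of_pos (inv_pos.mpr hb)]
      _ ≤ (‖z - z'‖ / (‖z‖ * ‖z'‖)) * (1 * ‖v‖)
          + ‖z'‖⁻¹ * ((2 * ‖z - z'‖ / ‖z‖) * ‖v‖) := by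
          refine add_le_add (mul_le_mul hinv ?_ (abs_nonneg _) (by positivity))
            (mul_le_mul_of_nonneg_left ?_ (inv_pos.mpr hb).le)
          · calc |(inner ℝ (uVec d z) v : ℝ)| ≤ ‖uVec d z‖ * ‖v‖ := abs_real_inner_le_norm _ _
              _ = 1 * ‖v‖ := by rw [hu]
          · calc |(inner ℝ (uVec d z - uVec d z') v : ℝ)|
                ≤ ‖uVec d z - uVec d z'‖ * ‖v‖ := abs_real_inner_le_norm _ _
              _ ≤ (2 * ‖z - z'‖ / ‖z‖) * ‖v‖ :=
                  mul_le_mul_of_nonneg_right huu' (norm_nonneg v)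
      _ = 3 * ‖z - z'‖ / (‖z‖ * ‖z'‖) * ‖v‖ := by field_simp; ring
      _ ≤ 6 * ‖z - z'‖ / (‖z‖ * ‖z'‖) * ‖v‖ := by gcongr; norm_num
end
end

section
/- Let γ ∈ (0,1] and let φ : ℝ^d ∖ {0} → ℝ^d × ℝ be defined by φ(z) = (z/‖z‖, log‖z‖) (Euclidean norm), with Fréchet derivative Dφ. There exists a constant C > 0 (depending only on γ and d) such that for all θ, θ′ ∈ ℝ^d with ‖θ‖ = ‖θ′‖ = 1 and all ρ, ρ′ ∈ ℝ with 1 ≤ ρ ≤ ρ′: ‖Dφ(e^ρ θ) − Dφ(e^{ρ′} θ′)‖_op ≤ C e^{−ρ} (|ρ′ − ρ|^γ + ‖θ′ − θ‖^γ). -/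
noncomputable section

lemma phi_contDiffAt (d : ℕ) {z : E d} (hz : z ≠ 0) :
    ContDiffAt ℝ 2 (phiMap d) z := by
  have hn : ContDiffAt ℝ 2 (fun z : E d => ‖z‖) z := contDiffAt_norm ℝ hz
  have h0 : ‖z‖ ≠ 0 := norm_ne_zero_iff.mpr hz
  exact ((hn.inv h0).smul contDiffAt_id).prodMk ((Real.contDiffAt_log.mpr h0).comp z hn)

lemma phi_scale (d : ℕ) {z : E d} (hz : z ≠ 0) {c : ℝ} (hc : 0 < c) :
    fderiv ℝ (phiMap d) (c • z) = c⁻¹ • fderiv ℝ (phiMap d) z := by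
  set A := fderiv ℝ (phiMap d) z with hA
  have hdiff : DifferentiableAt ℝ (phiMap d) z :=
    (phi_contDiffAt d hz).differentiableAt (by norm_num)
  have hAz : HasFDerivAt (phiMap d) A z := hdiff.hasFDerivAt
  have hcz : c • z ≠ 0 := smul_ne_zero hc.ne' hz
  have key : (fun w => phiMap d (c⁻¹ • w) + ((0 : E d), Real.log c)) =ᶠ[nhds (c • z)]
      (phiMap d) := by
    filter_upwards [IsOpen.mem_nhds isOpen_compl_singleton hcz] with w hw
    have hw0 : w ≠ 0 := hw
    have hnw : ‖w‖ ≠ 0 := norm_ne_zero_iff.mpr hw0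
    have hnc : ‖c⁻¹ • w‖ = c⁻¹ * ‖w‖ := by
      rw [norm_smul, Real.norm_eq_abs, abs_of_pos (inv_pos.mpr hc)]
    simp only [phiMap, thetaMap, logMap, Prod.mk_add_mk, Prod.mk.injEq, hnc]
    constructor
    · rw [mul_inv, inv_inv, add_zero, smul_smul]
      have hc0 : c ≠ 0 := hc.ne'
      congr 1
      field_simp
    · rw [Real.log_mul (inv_ne_zero hc.ne') hnw, Real.log_inv]
      abel
  have hinner : HasFDerivAt (fun w : E d => c⁻¹ • w)
      (c⁻¹ • (ContinuousLinearMap.id ℝ (E d))) (c • z) :=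
    (ContinuousLinearMap.id ℝ (E d)).hasFDerivAt.const_smul c⁻¹
  have hz' : c⁻¹ • (c • z) = z := by rw [smul_smul, inv_mul_cancel₀ hc.ne', one_smul]
  have hAz' : HasFDerivAt (phiMap d) A (c⁻¹ • (c • z)) := by rw [hz']; exact hAz
  have hcomp := hAz'.comp (c • z) hinner
  have hAcomp : A.comp (c⁻¹ • (ContinuousLinearMap.id ℝ (E d))) = c⁻¹ • A := by
    ext x <;> simp [map_smul]
  rw [hAcomp] at hcomp
  exact ((hcomp.add_const ((0 : E d), Real.log c)).congr_of_eventuallyEq key.symm).fderiv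

set_option maxHeartbeats 1000000 in
/-- Hölder estimate for `Dφ`, `φ(z) = (z/‖z‖, log ‖z‖)`, in
polar-logarithmic coordinates: for `‖θ‖ = ‖θ′‖ = 1` and `1 ≤ ρ ≤ ρ′`,
`‖Dφ(e^ρ θ) − Dφ(e^{ρ′} θ′)‖ ≤ C e^{−ρ} (|ρ′ − ρ|^γ + ‖θ′ − θ‖^γ)`. -/
theorem phi_fderiv_holder_polar (d : ℕ) (γ : ℝ) (hγ0 : 0 < γ) (hγ1 : γ ≤ 1) :
    ∃ C : ℝ, 0 < C ∧ ∀ (θ θ' : E d) (ρ ρ' : ℝ),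
      ‖θ‖ = 1 → ‖θ'‖ = 1 → 1 ≤ ρ → ρ ≤ ρ' →
      ‖fderiv ℝ (phiMap d) (Real.exp ρ • θ) - fderiv ℝ (phiMap d) (Real.exp ρ' • θ')‖ ≤
        C * Real.exp (-ρ) * ((ρ' - ρ) ^ γ + ‖θ' - θ‖ ^ γ) := by
  classical
  set g : E d → (E d →L[ℝ] E d × ℝ) := fderiv ℝ (phiMap d) with hg
  set K : Set (E d) := (fun z : E d => ‖z‖) ⁻¹' Set.Icc (1/2 : ℝ) 2 with hK
  have hKne : ∀ z ∈ K, z ≠ 0 := by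
    intro z hz h0
    have h : ‖z‖ ∈ Set.Icc (1/2 : ℝ) 2 := hz
    rw [h0, norm_zero] at h
    exact absurd h.1 (by norm_num)
  have hKcompact : IsCompact K := by
    apply Metric.isCompact_of_isClosed_isBounded
    · exact isClosed_Icc.preimage continuous_norm
    · apply Bornology.IsBounded.subset (Metric.isBounded_closedBall (x := (0 : E d)) (r := 2))
      intro z hz
      simpa [Metric.mem_closedBall, dist_eq_norm] using hz.2
  have hgc1 : ∀ z : E d, z ≠ 0 → ContDiffAt ℝ 1 g z := by
    intro z hz
    exact (phi_contDiffAt d hz).fderiv_right (by norm_num)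
  have hgdiff : ∀ z : E d, z ≠ 0 → DifferentiableAt ℝ g z := fun z hz =>
    (hgc1 z hz).differentiableAt one_ne_zero
  obtain ⟨M1, hM1⟩ := hKcompact.exists_bound_of_continuousOn
    (f := g) (fun z hz => ((hgc1 z (hKne z hz)).continuousAt).continuousWithinAt)
  obtain ⟨M2, hM2⟩ := hKcompact.exists_bound_of_continuousOn
    (f := fderiv ℝ g) (fun z hz =>
      (((hgc1 z (hKne z hz)).fderiv_right (m := 0) (by norm_num)).continuousAt).continuousWithinAt)
  set M : ℝ := max (max M1 M2) 1 with hM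
  have hM1' : ∀ z ∈ K, ‖g z‖ ≤ M := fun z hz =>
    (hM1 z hz).trans ((le_max_left M1 M2).trans (le_max_left _ 1))
  have hM2' : ∀ z ∈ K, ‖fderiv ℝ g z‖ ≤ M := fun z hz =>
    (hM2 z hz).trans ((le_max_right M1 M2).trans (le_max_left _ 1))
  have hMone : (1 : ℝ) ≤ M := le_max_right _ 1
  have hsphere : ∀ θ : E d, ‖θ‖ = 1 → θ ∈ K := by
    intro θ hθ
    have : ‖θ‖ ∈ Set.Icc (1/2 : ℝ) 2 := by rw [hθ]; constructor <;> norm_num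
    exact this
  -- Lipschitz estimate for close unit vectors
  have hlip : ∀ θ θ' : E d, ‖θ‖ = 1 → ‖θ'‖ = 1 → ‖θ' - θ‖ ≤ 1/2 →
      ‖g θ' - g θ‖ ≤ M * ‖θ' - θ‖ := by
    intro θ θ' h1 h1' hclose
    have hseg : segment ℝ θ θ' ⊆ K := by
      rintro p ⟨a, b, ha, hb, hab, rfl⟩
      have hup : ‖a • θ + b • θ'‖ ≤ 1 := by
        calc ‖a • θ + b • θ'‖ ≤ ‖a • θ‖ + ‖b • θ'‖ := norm_add_le _ _
          _ = a + b := by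
            rw [norm_smul, norm_smul, h1, h1', Real.norm_eq_abs, Real.norm_eq_abs,
              abs_of_nonneg ha, abs_of_nonneg hb, mul_one, mul_one]
          _ = 1 := hab
      have hrw : a • θ + b • θ' = θ + b • (θ' - θ) := by
        have : a = 1 - b := by linarith
        rw [this, smul_sub, sub_smul, one_smul]
        abel
      have hlow : (1:ℝ)/2 ≤ ‖a • θ + b • θ'‖ := by
        rw [hrw]
        have h1le : ‖b • (θ' - θ)‖ ≤ 1/2 := by
          rw [norm_smul, Real.norm_eq_abs, abs_of_nonneg hb]
          calc b * ‖θ' - θ‖ ≤ 1 * (1/2) := by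
                apply mul_le_mul (by linarith) hclose (norm_nonneg _) (by norm_num)
            _ = 1/2 := by norm_num
        have h2 : ‖θ‖ ≤ ‖θ + b • (θ' - θ)‖ + ‖b • (θ' - θ)‖ := by
          calc ‖θ‖ = ‖(θ + b • (θ' - θ)) - b • (θ' - θ)‖ := by rw [add_sub_cancel_right]
            _ ≤ _ := norm_sub_le _ _
        rw [h1] at h2
        linarith
      exact ⟨hlow, hup.trans (by norm_num)⟩
    exact (convex_segment θ θ').norm_image_sub_le_of_norm_fderiv_le
      (fun x hx => hgdiff x (hKne x (hseg hx)))
      (fun x hx => hM2' x (hseg hx))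
      (left_mem_segment ℝ θ θ') (right_mem_segment ℝ θ θ')
  -- Hölder estimate on the sphere
  have hHolder : ∀ θ θ' : E d, ‖θ‖ = 1 → ‖θ'‖ = 1 →
      ‖g θ - g θ'‖ ≤ 4 * M * ‖θ' - θ‖ ^ γ := by
    intro θ θ' h1 h1'
    set t := ‖θ' - θ‖ with ht
    have ht0 : 0 ≤ t := norm_nonneg _
    have htγ : 0 ≤ t ^ γ := Real.rpow_nonneg ht0 γ
    by_cases hcase : t ≤ 1/2
    · rcases eq_or_lt_of_le ht0 with h0 | hpos
      · have hzz : θ' - θ = 0 := norm_eq_zero.mp (by rw [← ht, ← h0])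
        have hθθ : θ' = θ := by rwa [sub_eq_zero] at hzz
        rw [hθθ, sub_self, norm_zero]
        positivity
      · have step1 : ‖g θ - g θ'‖ ≤ M * t := by
          rw [norm_sub_rev]; exact hlip θ θ' h1 h1' hcase
        have step2 : t ≤ t ^ γ := by
          calc t = t ^ (1:ℝ) := (Real.rpow_one t).symm
            _ ≤ t ^ γ := Real.rpow_le_rpow_of_exponent_ge hpos (by linarith) hγ1
        calc ‖g θ - g θ'‖ ≤ M * t := step1
          _ ≤ M * t ^ γ := by nlinarith
          _ ≤ 4 * M * t ^ γ := by nlinarith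
    · push_neg at hcase
      have hb : ‖g θ - g θ'‖ ≤ 2 * M := by
        calc ‖g θ - g θ'‖ ≤ ‖g θ‖ + ‖g θ'‖ := norm_sub_le _ _
          _ ≤ M + M := add_le_add (hM1' θ (hsphere θ h1)) (hM1' θ' (hsphere θ' h1'))
          _ = 2 * M := by ring
      have half : (1:ℝ)/2 ≤ t ^ γ := by
        calc (1:ℝ)/2 = (1/2 : ℝ) ^ (1:ℝ) := by rw [Real.rpow_one]
          _ ≤ (1/2 : ℝ) ^ γ := Real.rpow_le_rpow_of_exponent_ge (by norm_num) (by norm_num) hγ1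
          _ ≤ t ^ γ := Real.rpow_le_rpow (by norm_num) hcase.le hγ0.le
      calc ‖g θ - g θ'‖ ≤ 2 * M := hb
        _ ≤ 4 * M * t ^ γ := by nlinarith
  -- exponential estimate
  have hexp : ∀ ρ ρ' : ℝ, ρ ≤ ρ' →
      Real.exp (-ρ) - Real.exp (-ρ') ≤ Real.exp (-ρ) * (ρ' - ρ) ^ γ := by
    intro ρ ρ' hle
    set s := ρ' - ρ with hs
    have hs0 : 0 ≤ s := by simp [hs]; linarith
    have key : 1 - Real.exp (-s) ≤ s ^ γ := by
      by_cases h1 : s ≤ 1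
      · rcases eq_or_lt_of_le hs0 with h0 | hpos
        · rw [← h0]; simp [Real.zero_rpow hγ0.ne']
        · have e1 : 1 - Real.exp (-s) ≤ s := by
            have := Real.add_one_le_exp (-s)
            linarith
          have e2 : s ≤ s ^ γ := by
            calc s = s ^ (1:ℝ) := (Real.rpow_one s).symm
              _ ≤ s ^ γ := Real.rpow_le_rpow_of_exponent_ge hpos h1 hγ1
          linarith
      · push_neg at h1
        have e2 : (1:ℝ) ≤ s ^ γ := Real.one_le_rpow h1.le hγ0.le
        have := Real.exp_pos (-s)
        linarith
    have hfac : Real.exp (-ρ') = Real.exp (-ρ) * Real.exp (-s) := by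
      rw [← Real.exp_add]; congr 1; simp [hs]; ring
    rw [hfac]
    have := mul_le_mul_of_nonneg_left key (Real.exp_pos (-ρ)).le
    linarith [mul_le_mul_of_nonneg_left key (Real.exp_pos (-ρ)).le]
  refine ⟨4 * M, by linarith, ?_⟩
  intro θ θ' ρ ρ' h1 h1' hρ hρρ'
  have hθ0 : θ ≠ 0 := fun h => by rw [h, norm_zero] at h1; norm_num at h1
  have hθ0' : θ' ≠ 0 := fun h => by rw [h, norm_zero] at h1'; norm_num at h1'
  have e1 : g (Real.exp ρ • θ) = Real.exp (-ρ) • g θ := by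
    rw [hg, phi_scale d hθ0 (Real.exp_pos ρ), Real.exp_neg]
  have e2 : g (Real.exp ρ' • θ') = Real.exp (-ρ') • g θ' := by
    rw [hg, phi_scale d hθ0' (Real.exp_pos ρ'), Real.exp_neg]
  rw [e1, e2]
  have split : Real.exp (-ρ) • g θ - Real.exp (-ρ') • g θ' =
      Real.exp (-ρ) • (g θ - g θ') + (Real.exp (-ρ) - Real.exp (-ρ')) • g θ' := by
    module
  rw [split]
  have hLip : ‖g θ - g θ'‖ ≤ 4 * M * ‖θ' - θ‖ ^ γ := hHolder θ θ' h1 h1'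
  have hdiffexp : 0 ≤ Real.exp (-ρ) - Real.exp (-ρ') := by
    have : Real.exp (-ρ') ≤ Real.exp (-ρ) := Real.exp_le_exp.mpr (by linarith)
    linarith
  have hE : Real.exp (-ρ) - Real.exp (-ρ') ≤ Real.exp (-ρ) * (ρ' - ρ) ^ γ := hexp ρ ρ' hρρ'
  have hgθ' : ‖g θ'‖ ≤ M := hM1' θ' (hsphere θ' h1')
  have hrγ : 0 ≤ (ρ' - ρ) ^ γ := Real.rpow_nonneg (by linarith) γ
  have htγ : 0 ≤ ‖θ' - θ‖ ^ γ := Real.rpow_nonneg (norm_nonneg _) γ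
  have hexppos := Real.exp_pos (-ρ)
  calc ‖Real.exp (-ρ) • (g θ - g θ') + (Real.exp (-ρ) - Real.exp (-ρ')) • g θ'‖
      ≤ ‖Real.exp (-ρ) • (g θ - g θ')‖ + ‖(Real.exp (-ρ) - Real.exp (-ρ')) • g θ'‖ :=
        norm_add_le _ _
    _ = Real.exp (-ρ) * ‖g θ - g θ'‖ + (Real.exp (-ρ) - Real.exp (-ρ')) * ‖g θ'‖ := by
        rw [norm_smul (Real.exp (-ρ)) (g θ - g θ'),
          norm_smul (Real.exp (-ρ) - Real.exp (-ρ')) (g θ'), Real.norm_eq_abs,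
          Real.norm_eq_abs, abs_of_pos hexppos, abs_of_nonneg hdiffexp]
    _ ≤ Real.exp (-ρ) * (4 * M * ‖θ' - θ‖ ^ γ) + (Real.exp (-ρ) * (ρ' - ρ) ^ γ) * M := by
        apply add_le_add
        · exact mul_le_mul_of_nonneg_left hLip hexppos.le
        · apply mul_le_mul hE hgθ' (norm_nonneg _) (by positivity)
    _ ≤ 4 * M * Real.exp (-ρ) * ((ρ' - ρ) ^ γ + ‖θ' - θ‖ ^ γ) := by nlinarith
end
end
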